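/- arXiv:2310.16698 — 8 statements merged into one kernel-verified Lean document; each statement's English description precedes it below -/
import Mathlib

section
/- Suppose every primary variable has at least one valid instrument. Then a variable j ∈ P is a leaf (there is no j' with E j j') if and only if there exists an instrument l such that R l j and j is the only variable reached by l (for all j', R l j' implies j' = j). (Proposition 3(b), stated at the level of the reach relation, which by Proposition 2 and Lemma 1 coincides with the support of the fidelity-model coefficient matrix V.) -/
/-- **Proposition 3(b)** (peeling, leaf characterization).
`P` are primary variables, `I` instruments, `E` the parent–child relation of
an acyclic directed graph, and `W l k` means instrument `l` intervenes directly
on `k`.  Instrument `l` *reaches* `j` if `∃ k, W l k ∧ Relation.ReflTransGen E k j`.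
Assuming every primary variable has at least one valid instrument, a variable
`j` is a leaf iff there is an instrument `l` reaching `j` such that `j` is the
only variable reached by `l`. -/
theorem leaf_iff_unique_reach
    {P I : Type*} [Fintype P] [Fintype I]
    (E : P → P → Prop) (W : I → P → Prop)
    (hacyc : ∀ j : P, ¬ Relation.TransGen E j j)
    (hvalid : ∀ k : P, ∃ l : I, W l k ∧ ∀ k' : P, W l k' → k' = k)
    (j : P) :
    (¬ ∃ j' : P, E j j') ↔
      ∃ l : I, (∃ k : P, W l k ∧ Relation.ReflTransGen E k j) ∧
        (∀ j' : P, (∃ k : P, W l k ∧ Relation.ReflTransGen E k j') → j' = j) := by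
  constructor
  · intro hleaf
    obtain ⟨l, hl, huniq⟩ := hvalid j
    refine ⟨l, ⟨j, hl, Relation.ReflTransGen.refl⟩, ?_⟩
    rintro j' ⟨k, hwk, hpath⟩
    have hk : k = j := huniq k hwk
    subst hk
    cases (Relation.reflTransGen_iff_eq_or_transGen ..).mp hpath with
    | inl h => exact h
    | inr h =>
      exfalso
      obtain ⟨x, hx, -⟩ := Relation.TransGen.head'_iff.mp h
      exact hleaf ⟨x, hx⟩
  · rintro ⟨l, ⟨k, hwk, hpath⟩, huniq⟩ ⟨j', hE⟩
    have h1 : j' = j := huniq j' ⟨k, hwk, hpath.tail hE⟩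
    subst h1
    exact hacyc j' (Relation.TransGen.single hE)
end

section
/- Suppose every primary variable has at least one valid instrument. Then for all k, j ∈ P with k ≠ j: k is an ancestor of j (Relation.TransGen E k j) if and only if there exists an instrument l that is a valid instrument for k and that reaches j (R l j). (This is the exact combinatorial recovery of all ancestral relationships that underlies the correctness of the bottom-up peeling algorithm in Theorem 1.) -/
/-- **Recovery of ancestral relationships** (combinatorial core of Theorem 1).
Assuming every primary variable has at least one valid instrument, for `k ≠ j`
we have: `k` is an ancestor of `j` iff there is an instrument `l` that is a
valid instrument for `k` and that reaches `j`. -/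
theorem ancestor_iff_valid_instrument_reaches
    {P I : Type*} [Fintype P] [Fintype I]
    (E : P → P → Prop) (W : I → P → Prop)
    (hacyc : ∀ j : P, ¬ Relation.TransGen E j j)
    (hvalid : ∀ k : P, ∃ l : I, W l k ∧ ∀ k' : P, W l k' → k' = k)
    (k j : P) (hkj : k ≠ j) :
    Relation.TransGen E k j ↔
      ∃ l : I, (W l k ∧ ∀ k' : P, W l k' → k' = k) ∧
        (∃ k' : P, W l k' ∧ Relation.ReflTransGen E k' j) := by
  constructor
  · intro h
    obtain ⟨l, hl⟩ := hvalid k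
    exact ⟨l, hl, k, hl.1, h.to_reflTransGen⟩
  · rintro ⟨l, hl, k', hk', hpath⟩
    rw [hl.2 k' hk'] at hpath
    rcases (Relation.reflTransGen_iff_eq_or_transGen.mp hpath) with h | h
    · exact absurd h.symm hkj
    · exact h
end

section
/- Suppose instrument l intervenes on at least one variable (there exists k with W l k). Then the set {j | R l j} is a singleton if and only if there exists a variable k such that l is a valid instrument for k and k is a leaf; and in that case {j | R l j} = {k}. (This characterizes the leaf–instrument pairs identified in Step 2 of the peeling algorithm via rows of V with ℓ0-norm equal to one.) -/
/-- **Leaf–instrument pairs via singleton reach sets** (Step 2 of the peeling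
algorithm).  Suppose instrument `l` intervenes on at least one variable.  Then
the set of variables reached by `l` is a singleton iff there is a variable `k`
such that `l` is a valid instrument for `k` and `k` is a leaf; and in that
case the reach set equals `{k}`. -/
theorem reach_singleton_iff_valid_leaf
    {P I : Type*} [Fintype P] [Fintype I]
    (E : P → P → Prop) (W : I → P → Prop)
    (hacyc : ∀ j : P, ¬ Relation.TransGen E j j)
    (l : I) (hW : ∃ k : P, W l k) :
    ((∃ a : P, {j : P | ∃ k : P, W l k ∧ Relation.ReflTransGen E k j} = {a}) ↔
      ∃ k : P, (W l k ∧ ∀ k' : P, W l k' → k' = k) ∧ (¬ ∃ j' : P, E k j')) ∧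
    (∀ k : P, (W l k ∧ ∀ k' : P, W l k' → k' = k) → (¬ ∃ j' : P, E k j') →
      {j : P | ∃ k' : P, W l k' ∧ Relation.ReflTransGen E k' j} = {k}) := by
  have second : ∀ k : P, (W l k ∧ ∀ k' : P, W l k' → k' = k) → (¬ ∃ j' : P, E k j') →
      {j : P | ∃ k' : P, W l k' ∧ Relation.ReflTransGen E k' j} = {k} := by
    rintro k ⟨hk, huniq⟩ hleaf
    ext j
    simp only [Set.mem_setOf_eq, Set.mem_singleton_iff]
    constructor
    · rintro ⟨k', hk', hpath⟩
      rcases (huniq k' hk').symm with rfl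
      rcases hpath.cases_head with rfl | ⟨c, hc, _⟩
      · rfl
      · exact absurd ⟨c, hc⟩ hleaf
    · rintro rfl
      exact ⟨_, hk, Relation.ReflTransGen.refl⟩
  refine ⟨⟨?_, ?_⟩, second⟩
  · rintro ⟨a, ha⟩
    obtain ⟨k, hk⟩ := hW
    have hka : k = a := by
      have : k ∈ {j : P | ∃ k : P, W l k ∧ Relation.ReflTransGen E k j} :=
        ⟨k, hk, Relation.ReflTransGen.refl⟩
      rw [ha] at this
      exact this
    subst hka
    refine ⟨k, ⟨hk, fun k' hk' => ?_⟩, ?_⟩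
    · have : k' ∈ {j : P | ∃ k : P, W l k ∧ Relation.ReflTransGen E k j} :=
        ⟨k', hk', Relation.ReflTransGen.refl⟩
      rw [ha] at this
      exact this
    · rintro ⟨j', hj'⟩
      have : j' ∈ {j : P | ∃ k : P, W l k ∧ Relation.ReflTransGen E k j} :=
        ⟨k, hk, Relation.ReflTransGen.single hj'⟩
      rw [ha] at this
      rcases this with rfl
      exact hacyc j' (Relation.TransGen.single hj')
  · rintro ⟨k, hval, hleaf⟩
    exact ⟨k, second k hval hleaf⟩
end

section
/- Let θ⁰, θ̂ ∈ ℝ^K and m > 0. Suppose that for every point W on the line segment joining θ⁰ and θ̂, the Hessian satisfies (θ̂ − θ⁰)ᵀ ∇²L(W) (θ̂ − θ⁰) ≥ m ‖θ̂ − θ⁰‖₂² (restricted strong convexity along the segment). If L(θ̂) ≤ L(θ⁰), then ‖θ̂ − θ⁰‖₂ ≤ (2/m) √K · ‖∇L(θ⁰)‖∞. (Deterministic core of Lemma 3 of the supplementary materials: the ℓ2 rate of convergence of the oracle MLE.) -/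
/-- **ℓ2 rate of convergence of the oracle MLE** (deterministic core of
Lemma 3 of the supplementary materials).  If the Hessian quadratic form of the
twice continuously differentiable function `L` is bounded below by
`m ‖θ̂ − θ⁰‖₂²` along the segment joining `θ⁰` and `θ̂` (restricted strong
convexity) and `L(θ̂) ≤ L(θ⁰)`, then
`‖θ̂ − θ⁰‖₂ ≤ (2/m) √K ‖∇L(θ⁰)‖∞`. -/
theorem oracle_l2_rate
    (K : ℕ) (hK : 0 < K)
    (L : EuclideanSpace ℝ (Fin K) → ℝ) (hL : ContDiff ℝ 2 L)
    (θ0 θhat : EuclideanSpace ℝ (Fin K)) (m : ℝ) (hm : 0 < m)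
    (hHess : ∀ t ∈ Set.Icc (0 : ℝ) 1,
      m * ‖θhat - θ0‖ ^ 2 ≤
        iteratedFDeriv ℝ 2 L (θ0 + t • (θhat - θ0)) ![θhat - θ0, θhat - θ0])
    (hle : L θhat ≤ L θ0) :
    ‖θhat - θ0‖ ≤ (2 / m) * Real.sqrt K * ⨆ i : Fin K, |gradient L θ0 i| := by
  set Δ := θhat - θ0 with hΔ
  set g := gradient L θ0 with hg
  set S : ℝ := ⨆ i : Fin K, |g i| with hS
  have hfin : (Set.range fun i : Fin K => |g i|).Finite := Set.finite_range _
  have hne : Nonempty (Fin K) := ⟨⟨0, hK⟩⟩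
  have hbdd : BddAbove (Set.range fun i : Fin K => |g i|) := hfin.bddAbove
  have hSnn : 0 ≤ S := le_trans (abs_nonneg _) (le_ciSup hbdd hne.some)
  have hle_S : ∀ i, |g i| ≤ S := fun i => le_ciSup hbdd i
  -- norm of gradient bounded by √K * S
  have hgS : ‖g‖ ≤ Real.sqrt K * S := by
    have h1 : ‖g‖ ≤ Real.sqrt (K * S ^ 2) := by
      rw [EuclideanSpace.norm_eq]
      apply Real.sqrt_le_sqrt
      calc ∑ i, ‖g i‖ ^ 2 ≤ ∑ _i : Fin K, S ^ 2 := by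
            apply Finset.sum_le_sum
            intro i _
            rw [Real.norm_eq_abs]
            exact pow_le_pow_left₀ (abs_nonneg _) (hle_S i) 2
        _ = K * S ^ 2 := by simp [Finset.sum_const, mul_comm]
    calc ‖g‖ ≤ Real.sqrt (K * S ^ 2) := h1
      _ = Real.sqrt K * S := by
          rw [Real.sqrt_mul (Nat.cast_nonneg K), Real.sqrt_sq hSnn]
  -- path and derivatives
  set γ : ℝ → EuclideanSpace ℝ (Fin K) := fun t => θ0 + t • Δ with hγ
  have hγd : ∀ t : ℝ, HasDerivAt γ Δ t := by
    intro t
    simpa [hγ] using ((hasDerivAt_id t).smul_const Δ).const_add θ0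
  have hLd : Differentiable ℝ L := hL.differentiable (by norm_num)
  have hL1 : ContDiff ℝ 1 (fderiv ℝ L) := hL.fderiv_right (le_refl _)
  have hL1d : Differentiable ℝ (fderiv ℝ L) := hL1.differentiable one_ne_zero
  set φ : ℝ → ℝ := fun t => L (γ t) with hφ
  set ψ : ℝ → ℝ := fun t => fderiv ℝ L (γ t) Δ with hψ
  have hφd : ∀ t : ℝ, HasDerivAt φ (ψ t) t := fun t =>
    ((hLd (γ t)).hasFDerivAt.comp_hasDerivAt t (hγd t))
  have hψd : ∀ t : ℝ, HasDerivAt ψ (fderiv ℝ (fderiv ℝ L) (γ t) Δ Δ) t := by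
    intro t
    have h1 : HasDerivAt (fun s => fderiv ℝ L (γ s))
        (fderiv ℝ (fderiv ℝ L) (γ t) Δ) t :=
      ((hL1d (γ t)).hasFDerivAt.comp_hasDerivAt t (hγd t))
    simpa using h1.clm_apply (hasDerivAt_const t Δ)
  set c : ℝ := m * ‖Δ‖ ^ 2 with hc
  have hψ' : ∀ t ∈ Set.Icc (0 : ℝ) 1, c ≤ fderiv ℝ (fderiv ℝ L) (γ t) Δ Δ := by
    intro t ht
    have := hHess t ht
    rwa [iteratedFDeriv_two_apply] at this
  -- ψ t - ψ 0 ≥ c * t on [0,1] via monotonicity of G t = ψ t - c*t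
  set G : ℝ → ℝ := fun t => ψ t - c * t with hG
  have hGmono : MonotoneOn G (Set.Icc (0:ℝ) 1) := by
    apply monotoneOn_of_deriv_nonneg (convex_Icc 0 1)
    · have hψdiff : Differentiable ℝ ψ := fun t => (hψd t).differentiableAt
      exact (hψdiff.continuous.sub (continuous_const.mul continuous_id)).continuousOn
    · intro t _
      have hψdiff : Differentiable ℝ ψ := fun t => (hψd t).differentiableAt
      exact ((hψdiff t).sub ((differentiable_const c).mul differentiable_id t)).differentiableWithinAt
    · intro t ht
      rw [interior_Icc] at ht
      have hd : HasDerivAt G (fderiv ℝ (fderiv ℝ L) (γ t) Δ Δ - c) t := by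
        have h2 : HasDerivAt (fun s : ℝ => c * s) c t := by
          simpa using (hasDerivAt_id t).const_mul c
        exact (hψd t).sub h2
      rw [hd.deriv]
      have := hψ' t (Set.mem_Icc.mpr ⟨le_of_lt ht.1, le_of_lt ht.2⟩)
      linarith
  -- F t = φ t - φ 0 - t * ψ 0 - c/2 * t^2 is monotone on [0,1]
  set F : ℝ → ℝ := fun t => φ t - φ 0 - t * ψ 0 - c / 2 * t ^ 2 with hF
  have hFd : ∀ t : ℝ, HasDerivAt F (ψ t - ψ 0 - c * t) t := by
    intro t
    have h1 : HasDerivAt (fun t : ℝ => c / 2 * t ^ 2) (c * t) t := by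
      have := ((hasDerivAt_pow 2 t).const_mul (c / 2))
      exact this.congr_deriv (by ring)
    have h2 : HasDerivAt (fun t : ℝ => t * ψ 0) (ψ 0) t := by
      simpa using (hasDerivAt_id t).mul_const (ψ 0)
    have := (((hφd t).sub (hasDerivAt_const t (φ 0))).sub h2).sub h1
    rw [sub_zero] at this
    exact this
  have hFmono : MonotoneOn F (Set.Icc (0:ℝ) 1) := by
    apply monotoneOn_of_deriv_nonneg (convex_Icc 0 1)
    · have hFdiff : Differentiable ℝ F := fun t => (hFd t).differentiableAt
      exact hFdiff.continuous.continuousOn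
    · intro t _
      exact ((hFd t).differentiableAt).differentiableWithinAt
    · intro t ht
      rw [interior_Icc] at ht
      rw [(hFd t).deriv]
      have hGle : G 0 ≤ G t := hGmono (Set.mem_Icc.mpr ⟨le_refl 0, zero_le_one⟩)
        (Set.mem_Icc.mpr ⟨le_of_lt ht.1, le_of_lt ht.2⟩) (le_of_lt ht.1)
      simp only [hG] at hGle
      linarith [hGle]
  have hF1 : F 0 ≤ F 1 := hFmono (Set.mem_Icc.mpr ⟨le_refl 0, zero_le_one⟩)
    (Set.mem_Icc.mpr ⟨zero_le_one, le_refl 1⟩) zero_le_one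
  have hφ0 : φ 0 = L θ0 := by simp [hφ, hγ]
  have hφ1 : φ 1 = L θhat := by simp [hφ, hγ, hΔ]
  -- so c/2 ≤ -ψ 0
  have hkey : c / 2 + ψ 0 ≤ 0 := by
    have : F 0 = 0 := by simp [hF]
    have h1 : F 1 = φ 1 - φ 0 - ψ 0 - c / 2 := by simp [hF]
    rw [this, h1, hφ0, hφ1] at hF1
    linarith
  -- ψ 0 = ⟪g, Δ⟫
  have hψ0 : ψ 0 = inner ℝ g Δ := by
    have h2 : (inner ℝ g Δ : ℝ) = fderiv ℝ L θ0 Δ := by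
      rw [hg, gradient, ← InnerProductSpace.toDual_apply_apply,
        LinearIsometryEquiv.apply_symm_apply]
    rw [h2]
    simp [hψ, hγ]
  have hCS : -(inner ℝ g Δ : ℝ) ≤ ‖g‖ * ‖Δ‖ := by
    have := abs_real_inner_le_norm g Δ
    have h2 := neg_abs_le (inner ℝ g Δ : ℝ)
    linarith
  have hmain : m * ‖Δ‖ ^ 2 / 2 ≤ Real.sqrt K * S * ‖Δ‖ := by
    have h1 : c / 2 ≤ -ψ 0 := by linarith
    rw [hψ0] at h1
    calc m * ‖Δ‖ ^ 2 / 2 = c / 2 := by rw [hc]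
      _ ≤ -(inner ℝ g Δ : ℝ) := h1
      _ ≤ ‖g‖ * ‖Δ‖ := hCS
      _ ≤ Real.sqrt K * S * ‖Δ‖ := by
          apply mul_le_mul_of_nonneg_right hgS (norm_nonneg _)
  rcases eq_or_lt_of_le (norm_nonneg Δ) with h0 | h0
  · rw [← h0]
    positivity
  · rw [div_mul_eq_mul_div, div_mul_eq_mul_div, le_div_iff₀ hm]
    nlinarith [hmain, Real.sqrt_nonneg (K:ℝ)]
end

section
/- Let γ, τ > 0 and let S⁰, S′ ⊆ {1,…,q}. Let V̂⁰ ∈ ℝ^q be supported on S⁰ (V̂⁰_l = 0 for l ∉ S⁰) and satisfy the oracle first-order conditions (Xᵀ(Y − φ∘(X V̂⁰)))_l = 0 for all l ∈ S⁰, together with ‖Xᵀ(Y − φ∘(X V̂⁰)) / n‖∞ ≤ γτ/2. Let Ṽ be a global minimizer over ℝ^q of the weighted-ℓ1 objective V ↦ L(V) + γτ Σ_{l ∉ S′} |V_l| (the subproblem solved at one iteration of the DC algorithm, with unpenalized set S′). Then Δ := Ṽ − V̂⁰ satisfies the cone condition ‖Δ_{(S⁰ ∪ S′)ᶜ}‖₁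 ≤ 3 ‖Δ_{S⁰ △ S′}‖₁, where S⁰ △ S′ = (S⁰ ∖ S′) ∪ (S′ ∖ S⁰) is the symmetric difference. (Step 1 of the proof of Theorem 1, deterministic form on the event E_j.) -/
open scoped Classical

/-- GLM negative log-likelihood
`L(V) = (1/n) Σᵢ ( −Yᵢ ⟨V, Xᵢ⟩ + A(⟨V, Xᵢ⟩) )`. -/
noncomputable def negLogLik (n q : ℕ) (X : Matrix (Fin n) (Fin q) ℝ)
    (Y : Fin n → ℝ) (A : ℝ → ℝ) (V : Fin q → ℝ) : ℝ :=
  (1 / (n : ℝ)) * ∑ i, (-(Y i) * (∑ j, V j * X i j) + A (∑ j, V j * X i j))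

/-- Gradient inequality for a convex differentiable function on ℝ. -/
lemma convex_grad_ineq {A : ℝ → ℝ} (hA : ConvexOn ℝ Set.univ A)
    (hd : Differentiable ℝ A) (u v : ℝ) :
    A u + deriv A u * (v - u) ≤ A v := by
  rcases lt_trichotomy u v with h | h | h
  · have := hA.deriv_le_slope (Set.mem_univ u) (Set.mem_univ v) h hd.differentiableAt
    rw [slope_def_field, le_div_iff₀ (by linarith : (0:ℝ) < v - u)] at this
    linarith
  · simp [h]
  · have := hA.slope_le_deriv (Set.mem_univ v) (Set.mem_univ u) h hd.differentiableAt
    rw [slope_def_field, div_le_iff₀ (by linarith : (0:ℝ) < u - v)] at this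
    nlinarith [this]

/-- **Cone condition for the DC iterate** (Step 1 of the proof of Theorem 1,
deterministic form on the event `E_j`).  If the oracle estimator `V̂⁰` is
supported on `S⁰`, satisfies the oracle first-order conditions on `S⁰` and the
sup-norm gradient bound `‖Xᵀ(Y − φ∘(XV̂⁰))/n‖∞ ≤ γτ/2`, and `Ṽ` is a global
minimizer of the weighted-ℓ1 objective with unpenalized set `S'`, then
`Δ = Ṽ − V̂⁰` satisfies `‖Δ_{(S⁰∪S')ᶜ}‖₁ ≤ 3 ‖Δ_{S⁰△S'}‖₁`. -/
theorem dc_cone_condition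
    (n q : ℕ) (hn : 0 < n) (hq : 0 < q)
    (X : Matrix (Fin n) (Fin q) ℝ) (Y : Fin n → ℝ)
    (A : ℝ → ℝ) (hA : ConvexOn ℝ Set.univ A) (hA2 : ContDiff ℝ 2 A)
    (φ : ℝ → ℝ) (hφ : φ = deriv A)
    (γ τ : ℝ) (hγ : 0 < γ) (hτ : 0 < τ)
    (S0 S' : Finset (Fin q))
    (Vhat0 : Fin q → ℝ)
    (hsupp : ∀ l ∉ S0, Vhat0 l = 0)
    (hKKT : ∀ l ∈ S0, ∑ i, X i l * (Y i - φ (∑ j, Vhat0 j * X i j)) = 0)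
    (hgrad : ∀ l, |(∑ i, X i l * (Y i - φ (∑ j, Vhat0 j * X i j))) / (n : ℝ)|
        ≤ γ * τ / 2)
    (Vtil : Fin q → ℝ)
    (hmin : ∀ V : Fin q → ℝ,
      negLogLik n q X Y A Vtil + γ * τ * ∑ l ∈ S'ᶜ, |Vtil l| ≤
        negLogLik n q X Y A V + γ * τ * ∑ l ∈ S'ᶜ, |V l|) :
    ∑ l ∈ (S0 ∪ S')ᶜ, |Vtil l - Vhat0 l| ≤
      3 * ∑ l ∈ (S0 \ S') ∪ (S' \ S0), |Vtil l - Vhat0 l| := by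
  have hd : Differentiable ℝ A := hA2.differentiable (by norm_num)
  have hnpos : (0 : ℝ) < n := by exact_mod_cast hn
  set u : Fin n → ℝ := fun i => ∑ j, Vhat0 j * X i j with hu
  set v : Fin n → ℝ := fun i => ∑ j, Vtil j * X i j with hv
  set Δ : Fin q → ℝ := fun l => Vtil l - Vhat0 l with hΔ
  set g : Fin q → ℝ := fun l => (∑ i, X i l * (Y i - φ (u i))) / n with hg
  set T : ℝ := ∑ l, Δ l * (∑ i, X i l * (Y i - φ (u i))) with hT
  -- convexity: L(Vhat0) - L(Vtil) ≤ ∑ l, Δ l * g l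
  have key : negLogLik n q X Y A Vhat0 - negLogLik n q X Y A Vtil
      ≤ ∑ l, Δ l * g l := by
    have hterm : ∀ i, (-(Y i) * u i + A (u i)) + (φ (u i) - Y i) * (v i - u i)
        ≤ -(Y i) * v i + A (v i) := by
      intro i
      have := convex_grad_ineq hA hd (u i) (v i)
      rw [hφ]
      nlinarith [this]
    have hsum : ∑ i, ((-(Y i) * u i + A (u i)) + (φ (u i) - Y i) * (v i - u i))
        ≤ ∑ i, (-(Y i) * v i + A (v i)) := Finset.sum_le_sum fun i _ => hterm i
    have hswap : ∑ i, (Y i - φ (u i)) * (v i - u i) = T := by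
      have hvu : ∀ i, v i - u i = ∑ j, Δ j * X i j := by
        intro i
        simp only [hv, hu, hΔ, ← Finset.sum_sub_distrib, sub_mul]
      rw [Finset.sum_congr rfl fun i _ => by rw [hvu i, Finset.mul_sum], hT]
      rw [Finset.sum_comm]
      congr 1; ext l
      rw [Finset.mul_sum]
      congr 1; ext i; ring
    have hgsum : ∑ l, Δ l * g l = T / n := by
      rw [hT, Finset.sum_div]
      congr 1; ext l; simp only [hg]; ring
    have hphi : ∑ i, (φ (u i) - Y i) * (v i - u i) = -T := by
      rw [← hswap, ← Finset.sum_neg_distrib]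
      congr 1; ext i; ring
    rw [Finset.sum_add_distrib, hphi] at hsum
    simp only [negLogLik]
    rw [hgsum]
    calc (1/(n:ℝ)) * ∑ i, (-(Y i) * u i + A (u i))
          - (1/(n:ℝ)) * ∑ i, (-(Y i) * v i + A (v i))
        = (1/(n:ℝ)) * ((∑ i, (-(Y i) * u i + A (u i)))
            - ∑ i, (-(Y i) * v i + A (v i))) := by ring
      _ ≤ (1/(n:ℝ)) * T := by
          apply mul_le_mul_of_nonneg_left _ (by positivity)
          linarith
      _ = T / n := by ring
  have hg0 : ∀ l ∈ S0, g l = 0 := by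
    intro l hl
    simp only [hg, hu, hKKT l hl, zero_div]
  have hgb : ∀ l, |g l| ≤ γ * τ / 2 := fun l => hgrad l
  set a : ℝ := ∑ l ∈ (S0 ∪ S')ᶜ, |Δ l| with ha
  set b : ℝ := ∑ l ∈ S0 \ S', |Δ l| with hb
  set c : ℝ := ∑ l ∈ S' \ S0, |Δ l| with hc
  have hbnn : 0 ≤ b := Finset.sum_nonneg fun l _ => abs_nonneg _
  have hcnn : 0 ≤ c := Finset.sum_nonneg fun l _ => abs_nonneg _
  -- split S0ᶜ
  have hset1 : (S0ᶜ : Finset (Fin q)) = (S0 ∪ S')ᶜ ∪ (S' \ S0) := by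
    ext l
    simp only [Finset.mem_compl, Finset.mem_union, Finset.mem_sdiff]
    tauto
  have hdisj1 : Disjoint ((S0 ∪ S')ᶜ : Finset (Fin q)) (S' \ S0) := by
    rw [Finset.disjoint_left]
    intro l hl hl'
    simp only [Finset.mem_compl, Finset.mem_union, Finset.mem_sdiff] at hl hl'
    tauto
  have hset2 : (S'ᶜ : Finset (Fin q)) = (S0 ∪ S')ᶜ ∪ (S0 \ S') := by
    ext l
    simp only [Finset.mem_compl, Finset.mem_union, Finset.mem_sdiff]
    tauto
  have hdisj2 : Disjoint ((S0 ∪ S')ᶜ : Finset (Fin q)) (S0 \ S') := by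
    rw [Finset.disjoint_left]
    intro l hl hl'
    simp only [Finset.mem_compl, Finset.mem_union, Finset.mem_sdiff] at hl hl'
    tauto
  have hdisj3 : Disjoint (S0 \ S') (S' \ S0) := by
    rw [Finset.disjoint_left]
    intro l hl hl'
    simp only [Finset.mem_sdiff] at hl hl'
    tauto
  -- bound ∑ Δ g
  have hTb : ∑ l, Δ l * g l ≤ γ * τ / 2 * (a + c) := by
    have h1 : ∑ l, Δ l * g l = ∑ l ∈ S0ᶜ, Δ l * g l := by
      rw [← Finset.sum_add_sum_compl S0 (fun l => Δ l * g l)]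
      rw [Finset.sum_congr rfl fun l hl => by rw [hg0 l hl, mul_zero]]
      simp
    have h2 : ∑ l ∈ S0ᶜ, Δ l * g l ≤ ∑ l ∈ S0ᶜ, |Δ l| * (γ * τ / 2) := by
      apply Finset.sum_le_sum
      intro l _
      calc Δ l * g l ≤ |Δ l * g l| := le_abs_self _
        _ = |Δ l| * |g l| := abs_mul _ _
        _ ≤ |Δ l| * (γ * τ / 2) := mul_le_mul_of_nonneg_left (hgb l) (abs_nonneg _)
    have h3 : ∑ l ∈ S0ᶜ, |Δ l| * (γ * τ / 2) = γ * τ / 2 * (a + c) := by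
      rw [hset1, Finset.sum_union hdisj1, ha, hc, ← Finset.sum_mul, ← Finset.sum_mul]
      ring
    linarith
  -- from minimality
  have hminV := hmin Vhat0
  have hpen : a - b ≤ ∑ l ∈ S'ᶜ, |Vtil l| - ∑ l ∈ S'ᶜ, |Vhat0 l| := by
    rw [hset2, Finset.sum_union hdisj2, Finset.sum_union hdisj2]
    have e1 : ∑ l ∈ (S0 ∪ S')ᶜ, |Vhat0 l| = 0 := by
      apply Finset.sum_eq_zero
      intro l hl
      simp only [Finset.mem_compl, Finset.mem_union] at hl
      rw [hsupp l (fun h => hl (Or.inl h)), abs_zero]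
    have e2 : ∑ l ∈ (S0 ∪ S')ᶜ, |Vtil l| = a := by
      rw [ha]
      apply Finset.sum_congr rfl
      intro l hl
      simp only [Finset.mem_compl, Finset.mem_union] at hl
      rw [hΔ]
      simp only
      rw [hsupp l (fun h => hl (Or.inl h)), sub_zero]
    have e3 : ∑ l ∈ S0 \ S', |Vhat0 l| - ∑ l ∈ S0 \ S', |Vtil l| ≤ b := by
      rw [hb, ← Finset.sum_sub_distrib]
      apply Finset.sum_le_sum
      intro l _
      have := abs_sub_abs_le_abs_sub (Vhat0 l) (Vtil l)
      have h4 : |Vhat0 l - Vtil l| = |Δ l| := by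
        rw [hΔ, ← abs_neg]; congr 1; ring
      linarith
    linarith
  have hmain : γ * τ * (a - b) ≤ γ * τ / 2 * (a + c) := by
    have hL : negLogLik n q X Y A Vhat0 - negLogLik n q X Y A Vtil
        ≤ γ * τ / 2 * (a + c) := le_trans key hTb
    have := mul_le_mul_of_nonneg_left hpen (le_of_lt (mul_pos hγ hτ))
    linarith
  have hγτ : 0 < γ * τ := mul_pos hγ hτ
  have : a ≤ 2 * b + c := by nlinarith [hmain]
  have hrhs : ∑ l ∈ (S0 \ S') ∪ (S' \ S0), |Vtil l - Vhat0 l| = b + c := by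
    rw [Finset.sum_union hdisj3]
  calc (∑ l ∈ (S0 ∪ S')ᶜ, |Vtil l - Vhat0 l|) = a := rfl
    _ ≤ 2 * b + c := this
    _ ≤ 3 * (b + c) := by linarith
    _ = 3 * ∑ l ∈ (S0 \ S') ∪ (S' \ S0), |Vtil l - Vhat0 l| := by rw [hrhs]
end

section
/- Let γ, τ > 0, m > 0, and let S⁰, S′ ⊆ {1,…,q}. Let V̂⁰ ∈ ℝ^q be supported on S⁰ and satisfy the oracle first-order conditions (Xᵀ(Y − φ∘(X V̂⁰)))_l = 0 for all l ∈ S⁰, together with ‖Xᵀ(Y − φ∘(X V̂⁰)) / n‖∞ ≤ γτ/2. Let Ṽ be a global minimizer over ℝ^q of V ↦ L(V) + γτ Σ_{l ∉ S′} |V_l|, and set Δ := Ṽ − V̂⁰. Assume restricted strong convexity along the segment: for every point W on the line segment joining V̂⁰ and Ṽ, Δᵀ ∇²L(W) Δ ≥ m ‖Δ‖₂². Then ‖Ṽ − V̂⁰‖₂ ≤ (1.5 γ τ / m) · √(|S⁰ △ S′|), where S⁰ △ S′ is the symmetric difference of S⁰ and S′. (One-step ℓ2 error bound for the DC iterate,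 from Step 1 of the proof of Theorem 1.) -/
open scoped Classical

set_option maxHeartbeats 1000000

/-- **One-step ℓ2 error bound for the DC iterate** (Step 1 of the proof of
Theorem 1).  Under the oracle first-order conditions, the sup-norm gradient
bound, global minimality of `Ṽ` for the weighted-ℓ1 objective with
unpenalized set `S'`, and restricted strong convexity along the segment
joining `V̂⁰` and `Ṽ`, one has
`‖Ṽ − V̂⁰‖₂ ≤ (1.5 γτ/m) √|S⁰ △ S'|`. -/
theorem dc_one_step_l2_bound
    (n q : ℕ) (hn : 0 < n) (hq : 0 < q)
    (X : Matrix (Fin n) (Fin q) ℝ) (Y : Fin n → ℝ)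
    (A : ℝ → ℝ) (hA : ConvexOn ℝ Set.univ A) (hA2 : ContDiff ℝ 2 A)
    (φ : ℝ → ℝ) (hφ : φ = deriv A)
    (γ τ m : ℝ) (hγ : 0 < γ) (hτ : 0 < τ) (hm : 0 < m)
    (S0 S' : Finset (Fin q))
    (Vhat0 : Fin q → ℝ)
    (hsupp : ∀ l ∉ S0, Vhat0 l = 0)
    (hKKT : ∀ l ∈ S0, ∑ i, X i l * (Y i - φ (∑ j, Vhat0 j * X i j)) = 0)
    (hgrad : ∀ l, |(∑ i, X i l * (Y i - φ (∑ j, Vhat0 j * X i j))) / (n : ℝ)|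
        ≤ γ * τ / 2)
    (Vtil : Fin q → ℝ)
    (hmin : ∀ V : Fin q → ℝ,
      negLogLik n q X Y A Vtil + γ * τ * ∑ l ∈ S'ᶜ, |Vtil l| ≤
        negLogLik n q X Y A V + γ * τ * ∑ l ∈ S'ᶜ, |V l|)
    (hRSC : ∀ t ∈ Set.Icc (0 : ℝ) 1,
      m * ∑ l, (Vtil l - Vhat0 l) ^ 2 ≤
        iteratedFDeriv ℝ 2 (negLogLik n q X Y A)
          (Vhat0 + t • (Vtil - Vhat0)) ![Vtil - Vhat0, Vtil - Vhat0]) :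
    Real.sqrt (∑ l, (Vtil l - Vhat0 l) ^ 2) ≤
      (1.5 * γ * τ / m) * Real.sqrt (((S0 \ S') ∪ (S' \ S0)).card) := by
  subst hφ
  set L : (Fin q → ℝ) → ℝ := negLogLik n q X Y A with hLdef
  set Δ : Fin q → ℝ := Vtil - Vhat0 with hΔdef
  have hΔap : ∀ l, Δ l = Vtil l - Vhat0 l := fun l => rfl
  set r2 : ℝ := ∑ l, (Vtil l - Vhat0 l) ^ 2 with hr2def
  have hr2nn : 0 ≤ r2 := Finset.sum_nonneg fun l _ => sq_nonneg _
  set c0 : ℝ := m * r2 with hc0def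
  set c : ℝ → (Fin q → ℝ) := fun t => Vhat0 + t • Δ with hcdef
  set g : ℝ → ℝ := fun t => L (c t) with hgdef
  have hγτ : (0:ℝ) < γ * τ := mul_pos hγ hτ
  -- smoothness of L
  have hli : ∀ i, ContDiff ℝ 2 (fun V : Fin q → ℝ => ∑ j, V j * X i j) := by
    intro i
    apply ContDiff.sum
    intro j _
    exact ((ContinuousLinearMap.proj j : (Fin q → ℝ) →L[ℝ] ℝ).contDiff).mul contDiff_const
  have hC2 : ContDiff ℝ 2 L := by
    rw [hLdef]
    unfold negLogLik
    apply contDiff_const.mul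
    apply ContDiff.sum
    intro i _
    exact (contDiff_const.mul (hli i)).add ((hA2.comp (hli i)))
  have hdiffL : Differentiable ℝ L := hC2.differentiable (by norm_num)
  -- the curve
  have hc : ∀ t : ℝ, HasDerivAt c Δ t := by
    intro t
    have := ((hasDerivAt_id t).smul_const Δ).const_add Vhat0
    simpa [hcdef] using this
  have hdg : ∀ t : ℝ, HasDerivAt g (fderiv ℝ L (c t) Δ) t := by
    intro t
    exact (hdiffL (c t)).hasFDerivAt.comp_hasDerivAt t (hc t)
  -- second derivative along the line
  have hF1 : ContDiff ℝ 1 (fderiv ℝ L) := hC2.fderiv_right (by norm_num)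
  set Q : ℝ → ℝ := fun t => fderiv ℝ (fderiv ℝ L) (c t) Δ Δ with hQdef
  have hdg2 : ∀ t : ℝ, HasDerivAt (fun s => fderiv ℝ L (c s) Δ) (Q t) t := by
    intro t
    have h1 : HasDerivAt (fun s => fderiv ℝ L (c s)) (fderiv ℝ (fderiv ℝ L) (c t) Δ) t :=
      ((hF1.differentiable (by norm_num)) (c t)).hasFDerivAt.comp_hasDerivAt t (hc t)
    have h2 := h1.clm_apply (hasDerivAt_const t Δ)
    simpa using h2
  have hQlb : ∀ t ∈ Set.Icc (0:ℝ) 1, c0 ≤ Q t := by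
    intro t ht
    have := hRSC t ht
    rwa [iteratedFDeriv_two_apply] at this
  -- k is convex on [0,1]
  set k : ℝ → ℝ := fun t => g t - c0 / 2 * t ^ 2 with hkdef
  set k' : ℝ → ℝ := fun t => fderiv ℝ L (c t) Δ - c0 * t with hk'def
  have hdk : ∀ t : ℝ, HasDerivAt k (k' t) t := by
    intro t
    have h2 : HasDerivAt (fun s : ℝ => c0 / 2 * s ^ 2) (c0 * t) t := by
      have := (hasDerivAt_pow 2 t).const_mul (c0 / 2)
      exact this.congr_deriv (by rw [show (2:ℕ) - 1 = 1 from rfl]; push_cast; ring)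
    exact (hdg t).sub h2
  have hdk2 : ∀ t : ℝ, HasDerivAt k' (Q t - c0) t := by
    intro t
    have h2 : HasDerivAt (fun s : ℝ => c0 * s) c0 t := by
      simpa using (hasDerivAt_id t).const_mul c0
    exact (hdg2 t).sub h2
  have hconv : ConvexOn ℝ (Set.Icc (0:ℝ) 1) k := by
    apply convexOn_of_hasDerivWithinAt2_nonneg (convex_Icc 0 1)
      (Continuous.continuousOn (by
        refine continuous_iff_continuousAt.2 fun t => (hdk t).continuousAt))
      (fun x _ => (hdk x).hasDerivWithinAt)
      (fun x _ => (hdk2 x).hasDerivWithinAt)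
    intro x hx
    rw [interior_Icc] at hx
    have := hQlb x ⟨le_of_lt hx.1, le_of_lt hx.2⟩
    linarith
  -- (a): k 1 - k 0 ≥ k' 0
  have hstepA : k' 0 ≤ k 1 - k 0 := by
    have hslope : Filter.Tendsto (slope k 0) (nhdsWithin 0 (Set.Ioi 0)) (nhds (k' 0)) := by
      have := hasDerivAt_iff_tendsto_slope.1 (hdk 0)
      exact this.mono_left (nhdsWithin_mono 0 (fun x hx => ne_of_gt hx))
    refine le_of_tendsto hslope ?_
    filter_upwards [Ioo_mem_nhdsGT_of_mem (Set.mem_Ico.2 ⟨le_refl (0:ℝ), one_pos⟩)] with t ht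
    have h := hconv.secant_mono (a := 0) (x := t) (y := 1)
      (Set.mem_Icc.2 ⟨le_refl 0, zero_le_one⟩)
      (Set.mem_Icc.2 ⟨le_of_lt ht.1, le_of_lt ht.2⟩)
      (Set.mem_Icc.2 ⟨zero_le_one, le_refl 1⟩)
      (ne_of_gt ht.1) one_ne_zero (le_of_lt ht.2)
    rw [slope_def_field]
    calc (k t - k 0) / (t - 0) ≤ (k 1 - k 0) / (1 - 0) := h
      _ = k 1 - k 0 := by norm_num
  -- penalties
  set P0 : ℝ := ∑ l ∈ S'ᶜ, |Vhat0 l| with hP0def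
  set P1 : ℝ := ∑ l ∈ S'ᶜ, |Vtil l| with hP1def
  have hc1 : c 1 = Vtil := by
    funext l
    simp [hcdef, hΔap l]
  -- (b): the one-third point comparison
  have hstepB : g 1 + γ * τ * P1 ≤ g 0 + γ * τ * P0 - c0 / 6 := by
    have hmin3 := hmin (c (1/3 : ℝ))
    have hgVtil : L Vtil = g 1 := by simp only [hgdef]; rw [hc1]
    have hg3 : L (c (1/3 : ℝ)) = g (1/3 : ℝ) := rfl
    have hP3 : ∑ l ∈ S'ᶜ, |(c (1/3:ℝ)) l| ≤ (2/3) * P0 + (1/3) * P1 := by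
      rw [hP0def, hP1def, Finset.mul_sum, Finset.mul_sum, ← Finset.sum_add_distrib]
      apply Finset.sum_le_sum
      intro l _
      have h1 : (c (1/3:ℝ)) l = (2/3) * Vhat0 l + (1/3) * Vtil l := by
        simp only [hcdef, Pi.add_apply, Pi.smul_apply, smul_eq_mul, hΔdef, Pi.sub_apply]
        ring
      rw [h1]
      calc |(2/3) * Vhat0 l + (1/3) * Vtil l|
          ≤ |(2/3) * Vhat0 l| + |(1/3) * Vtil l| := abs_add_le _ _
        _ = 2/3 * |Vhat0 l| + 1/3 * |Vtil l| := by
            rw [abs_mul, abs_mul, abs_of_pos (by norm_num : (0:ℝ) < 2/3),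
              abs_of_pos (by norm_num : (0:ℝ) < 1/3)]
    have hk13 : k (1/3 : ℝ) ≤ (2/3) * k 0 + (1/3) * k 1 := by
      have h := hconv.2 (Set.mem_Icc.2 ⟨le_refl (0:ℝ), zero_le_one⟩)
        (Set.mem_Icc.2 ⟨zero_le_one, le_refl (1:ℝ)⟩)
        (by norm_num : (0:ℝ) ≤ 2/3) (by norm_num : (0:ℝ) ≤ 1/3) (by norm_num)
      have e1 : (2/3 : ℝ) • (0:ℝ) + (1/3 : ℝ) • (1:ℝ) = 1/3 := by norm_num
      rw [e1] at h
      simpa using h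
    have hmul : γ * τ * (∑ l ∈ S'ᶜ, |(c (1/3:ℝ)) l|) ≤ γ * τ * ((2/3) * P0 + (1/3) * P1) :=
      mul_le_mul_of_nonneg_left hP3 (le_of_lt hγτ)
    have hg3k : g (1/3 : ℝ) = k (1/3 : ℝ) + c0 / 18 := by simp only [hkdef]; ring
    have hg1k : g 1 = k 1 + c0 / 2 := by simp only [hkdef]; ring
    have hg0k : g 0 = k 0 := by simp only [hkdef]; ring
    rw [hgVtil, hg3] at hmin3
    linarith [hmin3, hmul, hk13, hg3k, hg1k, hg0k]
  -- combine (a) and (b)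
  have hg1g0 : g 0 + k' 0 + c0 / 2 ≤ g 1 := by
    have hg1k : g 1 = k 1 + c0 / 2 := by simp only [hkdef]; ring
    have hg0k : g 0 = k 0 := by simp only [hkdef]; ring
    clear_value k k'
    linarith
  have hmain : k' 0 + 2/3 * c0 ≤ γ * τ * (P0 - P1) := by
    clear_value k k' g c0
    linarith
  -- identify k' 0 explicitly
  set a : Fin n → ℝ := fun i => ∑ j, Vhat0 j * X i j with hadef
  set b : Fin n → ℝ := fun i => ∑ j, Δ j * X i j with hbdef
  set u : Fin q → ℝ := fun l => ∑ i, X i l * (Y i - deriv A (a i)) with hudef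
  have hlin : ∀ (i : Fin n) (t : ℝ), ∑ j, (c t) j * X i j = a i + t * b i := by
    intro i t
    rw [hadef, hbdef]
    simp only [hcdef, Pi.add_apply, Pi.smul_apply, smul_eq_mul]
    rw [Finset.mul_sum, ← Finset.sum_add_distrib]
    apply Finset.sum_congr rfl
    intro j _
    ring
  have hgexp : g = fun t => (1 / (n:ℝ)) * ∑ i, (-(Y i) * (a i + t * b i) + A (a i + t * b i)) := by
    funext t
    show negLogLik n q X Y A (c t) = _
    unfold negLogLik
    congr 1
    exact Finset.sum_congr rfl fun i _ => by rw [hlin i t]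
  set E0 : ℝ := (1 / (n:ℝ)) * ∑ i, ((-(Y i) + deriv A (a i)) * b i) with hE0def
  have hdgE : HasDerivAt g E0 0 := by
    rw [hE0def, hgexp]
    apply HasDerivAt.const_mul
    apply HasDerivAt.fun_sum
    intro i _
    have hinner : HasDerivAt (fun t : ℝ => a i + t * b i) (b i) 0 := by
      have := ((hasDerivAt_id (0:ℝ)).mul_const (b i)).const_add (a i)
      simpa using this
    have hA' : HasDerivAt A (deriv A (a i + 0 * b i)) (a i + 0 * b i) :=
      ((hA2.differentiable (by norm_num)) (a i + 0 * b i)).hasDerivAt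
    have hcomp := hA'.comp (0:ℝ) hinner
    have h1 : HasDerivAt (fun t : ℝ => -(Y i) * (a i + t * b i)) (-(Y i) * b i) 0 :=
      hinner.const_mul (-(Y i))
    have h := h1.add hcomp
    have e : a i + 0 * b i = a i := by ring
    rw [e] at h
    exact h.congr_deriv (by ring)
  have hk'0 : k' 0 = E0 := by
    have h1 : fderiv ℝ L (c 0) Δ = E0 := HasDerivAt.unique (hdg 0) hdgE
    rw [hk'def]
    simpa using h1
  -- rewrite E0 via sum swap
  have hbap : ∀ i, b i = ∑ j, Δ j * X i j := fun i => rfl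
  have huap : ∀ j, u j = ∑ i, X i j * (Y i - deriv A (a i)) := fun j => rfl
  have hswap : E0 = ∑ j, Δ j * (-(u j) / (n:ℝ)) := by
    rw [hE0def]
    have h1 : (1 / (n:ℝ)) * ∑ i, ((-(Y i) + deriv A (a i)) * b i)
        = ∑ i, ∑ j, (1 / (n:ℝ)) * ((-(Y i) + deriv A (a i)) * (Δ j * X i j)) := by
      rw [Finset.mul_sum]
      refine Finset.sum_congr rfl fun i _ => ?_
      rw [hbap i, Finset.mul_sum, Finset.mul_sum]
    have h2 : ∀ j, Δ j * (-(u j) / (n:ℝ))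
        = ∑ i, (1 / (n:ℝ)) * ((-(Y i) + deriv A (a i)) * (Δ j * X i j)) := by
      intro j
      rw [huap j, ← Finset.sum_neg_distrib, Finset.sum_div, Finset.mul_sum]
      refine Finset.sum_congr rfl fun i _ => ?_
      ring
    rw [h1, Finset.sum_comm]
    exact Finset.sum_congr rfl fun j _ => (h2 j).symm
  -- bound -E0
  have hE0bound : -E0 ≤ (γ * τ / 2) * ∑ l ∈ S0ᶜ, |Δ l| := by
    have h1 : -E0 = ∑ j, Δ j * (u j / (n:ℝ)) := by
      rw [hswap, ← Finset.sum_neg_distrib]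
      refine Finset.sum_congr rfl fun j _ => ?_
      ring
    rw [h1]
    have hsplit : ∑ j, Δ j * (u j / (n:ℝ))
        = ∑ j ∈ S0, Δ j * (u j / (n:ℝ)) + ∑ j ∈ S0ᶜ, Δ j * (u j / (n:ℝ)) :=
      (Finset.sum_add_sum_compl S0 _).symm
    rw [hsplit]
    have hz : ∑ j ∈ S0, Δ j * (u j / (n:ℝ)) = 0 := by
      apply Finset.sum_eq_zero
      intro j hj
      rw [huap j, hKKT j hj]
      simp
    rw [hz, zero_add, Finset.mul_sum]
    apply Finset.sum_le_sum
    intro j _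
    calc Δ j * (u j / (n:ℝ)) ≤ |Δ j * (u j / (n:ℝ))| := le_abs_self _
      _ = |Δ j| * |u j / (n:ℝ)| := abs_mul _ _
      _ ≤ |Δ j| * (γ * τ / 2) := by
          apply mul_le_mul_of_nonneg_left (hgrad j) (abs_nonneg _)
      _ = γ * τ / 2 * |Δ j| := by ring
  -- split sums over symmetric difference pieces
  set SA : Finset (Fin q) := S0 \ S' with hSAdef
  set SB : Finset (Fin q) := S' \ S0 with hSBdef
  set SC : Finset (Fin q) := S'ᶜ \ S0 with hSCdef
  have hS0c : S0ᶜ = SB ∪ SC := by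
    ext l
    simp [hSBdef, hSCdef, Finset.mem_compl, Finset.mem_sdiff, Finset.mem_union]
    tauto
  have hdisjBC : Disjoint SB SC := by
    rw [hSBdef, hSCdef, Finset.disjoint_left]
    intro x hx hx2
    rw [Finset.mem_sdiff] at hx hx2
    exact (Finset.mem_compl.1 hx2.1) hx.1
  have hsum0c : ∑ l ∈ S0ᶜ, |Δ l| = ∑ l ∈ SB, |Δ l| + ∑ l ∈ SC, |Δ l| := by
    rw [hS0c, Finset.sum_union hdisjBC]
  -- penalty difference bound
  have hS'c : S'ᶜ = (S'ᶜ ∩ S0) ∪ SC := by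
    ext l
    simp [hSCdef, Finset.mem_compl, Finset.mem_sdiff, Finset.mem_union, Finset.mem_inter]
    tauto
  have hdisjC : Disjoint (S'ᶜ ∩ S0) SC := by
    rw [hSCdef, Finset.disjoint_left]
    intro x hx hx2
    rw [Finset.mem_inter] at hx
    rw [Finset.mem_sdiff] at hx2
    exact hx2.2 hx.2
  have hinterA : S'ᶜ ∩ S0 = SA := by
    ext l
    simp [hSAdef, Finset.mem_inter, Finset.mem_compl, Finset.mem_sdiff]
    tauto
  have hPdiff : P0 - P1 ≤ ∑ l ∈ SA, |Δ l| - ∑ l ∈ SC, |Δ l| := by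
    have h1 : P0 - P1 = ∑ l ∈ S'ᶜ, (|Vhat0 l| - |Vtil l|) := by
      rw [hP0def, hP1def, Finset.sum_sub_distrib]
    rw [h1, hS'c, Finset.sum_union hdisjC, hinterA, sub_eq_add_neg, ← Finset.sum_neg_distrib]
    apply add_le_add
    · apply Finset.sum_le_sum
      intro l _
      calc |Vhat0 l| - |Vtil l| ≤ |Vhat0 l - Vtil l| := abs_sub_abs_le_abs_sub _ _
        _ = |Δ l| := by rw [hΔap l, abs_sub_comm]
    · apply Finset.sum_le_sum
      intro l hl
      rw [hSCdef, Finset.mem_sdiff] at hl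
      have h0 : Vhat0 l = 0 := hsupp l hl.2
      rw [h0, hΔap l, h0, sub_zero]
      simp
  -- assemble the key inequality
  have hSAnn : (0:ℝ) ≤ ∑ l ∈ SA, |Δ l| := Finset.sum_nonneg fun l _ => abs_nonneg _
  have hSBnn : (0:ℝ) ≤ ∑ l ∈ SB, |Δ l| := Finset.sum_nonneg fun l _ => abs_nonneg _
  have hSCnn : (0:ℝ) ≤ ∑ l ∈ SC, |Δ l| := Finset.sum_nonneg fun l _ => abs_nonneg _
  have hkey : 2/3 * c0 ≤ γ * τ * (∑ l ∈ SA, |Δ l| + ∑ l ∈ SB, |Δ l|) := by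
    have h1 : γ * τ * (P0 - P1) ≤ γ * τ * (∑ l ∈ SA, |Δ l| - ∑ l ∈ SC, |Δ l|) :=
      mul_le_mul_of_nonneg_left hPdiff (le_of_lt hγτ)
    have h2 := hE0bound
    rw [hsum0c] at h2
    have h3 := hmain
    rw [hk'0] at h3
    clear_value k' g c0 E0
    nlinarith [h3, h1, h2, hSAnn, hSBnn, hSCnn, hγτ]
  -- Cauchy–Schwarz on the symmetric difference
  have hdisjAB : Disjoint SA SB := by
    rw [hSAdef, hSBdef, Finset.disjoint_left]
    intro x hx hx2
    rw [Finset.mem_sdiff] at hx hx2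
    exact hx2.2 hx.1
  have hunion : ∑ l ∈ SA ∪ SB, |Δ l| = ∑ l ∈ SA, |Δ l| + ∑ l ∈ SB, |Δ l| :=
    Finset.sum_union hdisjAB
  have hCS : ∑ l ∈ SA ∪ SB, |Δ l|
      ≤ Real.sqrt ((SA ∪ SB).card) * Real.sqrt r2 := by
    have h1 : (∑ l ∈ SA ∪ SB, |Δ l|) ^ 2 ≤ ((SA ∪ SB).card : ℝ) * ∑ l ∈ SA ∪ SB, |Δ l| ^ 2 := by
      exact sq_sum_le_card_mul_sum_sq
    have h2 : ∑ l ∈ SA ∪ SB, |Δ l| ^ 2 ≤ r2 := by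
      rw [hr2def]
      have h3 : ∀ l, |Δ l| ^ 2 = (Vtil l - Vhat0 l) ^ 2 := by
        intro l
        rw [sq_abs, hΔap l]
      calc ∑ l ∈ SA ∪ SB, |Δ l| ^ 2 = ∑ l ∈ SA ∪ SB, (Vtil l - Vhat0 l) ^ 2 :=
            Finset.sum_congr rfl fun l _ => h3 l
        _ ≤ ∑ l, (Vtil l - Vhat0 l) ^ 2 :=
            Finset.sum_le_sum_of_subset_of_nonneg (Finset.subset_univ _)
              (fun l _ _ => sq_nonneg _)
    have h4 : (∑ l ∈ SA ∪ SB, |Δ l|) ^ 2 ≤ ((SA ∪ SB).card : ℝ) * r2 := by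
      calc (∑ l ∈ SA ∪ SB, |Δ l|) ^ 2 ≤ ((SA ∪ SB).card : ℝ) * ∑ l ∈ SA ∪ SB, |Δ l| ^ 2 := h1
        _ ≤ ((SA ∪ SB).card : ℝ) * r2 := by
            apply mul_le_mul_of_nonneg_left h2 (Nat.cast_nonneg _)
    have h5 : ∑ l ∈ SA ∪ SB, |Δ l| ≤ Real.sqrt (((SA ∪ SB).card : ℝ) * r2) :=
      Real.le_sqrt_of_sq_le (by exact h4)
    calc ∑ l ∈ SA ∪ SB, |Δ l| ≤ Real.sqrt (((SA ∪ SB).card : ℝ) * r2) := h5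
      _ = Real.sqrt ((SA ∪ SB).card) * Real.sqrt r2 := Real.sqrt_mul (Nat.cast_nonneg _) _
  -- finish
  set s : ℝ := Real.sqrt r2 with hsdef
  set K : ℝ := Real.sqrt ((SA ∪ SB).card) with hKdef
  have hsnn : 0 ≤ s := Real.sqrt_nonneg _
  have hKnn : 0 ≤ K := Real.sqrt_nonneg _
  have hs2 : s ^ 2 = r2 := Real.sq_sqrt hr2nn
  have hfinal : 2/3 * m * s^2 ≤ γ * τ * (K * s) := by
    rw [hs2]
    calc 2/3 * m * r2 = 2/3 * c0 := by rw [hc0def]; ring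
      _ ≤ γ * τ * (∑ l ∈ SA, |Δ l| + ∑ l ∈ SB, |Δ l|) := hkey
      _ = γ * τ * ∑ l ∈ SA ∪ SB, |Δ l| := by rw [hunion]
      _ ≤ γ * τ * (K * s) := by
          apply mul_le_mul_of_nonneg_left _ (le_of_lt hγτ)
          rw [hKdef, hsdef]
          exact hCS
  show s ≤ 1.5 * γ * τ / m * K
  rcases eq_or_lt_of_le hsnn with h0 | hpos
  · rw [← h0]
    exact mul_nonneg (div_nonneg (mul_nonneg (mul_nonneg (by norm_num) hγ.le) hτ.le) hm.le) hKnn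
  · rw [div_mul_eq_mul_div, le_div_iff₀ hm]
    clear_value s K r2 c0
    nlinarith [hfinal, hpos, mul_pos hγ hτ, hKnn]
end

section
/- Let γ, τ > 0, m > 0, and let S⁰, S′ ⊆ {1,…,q}. Let V⁰ ∈ ℝ^q have support exactly S⁰ with min_{l ∈ S⁰} |V⁰_l| ≥ 2.5 τ. Let V̂⁰ ∈ ℝ^q be supported on S⁰, satisfy the oracle first-order conditions (Xᵀ(Y − φ∘(X V̂⁰)))_l = 0 for all l ∈ S⁰, ‖Xᵀ(Y − φ∘(X V̂⁰)) / n‖∞ ≤ γτ/2, and ‖V̂⁰ − V⁰‖∞ ≤ τ/2. Let Ṽ be a global minimizer over ℝ^q of V ↦ L(V) + γτ Σ_{l ∉ S′} |V_l|, set Δ := Ṽ − V̂⁰, and assume that for every point W on the line segment joining V̂⁰ and Ṽ, Δᵀ ∇²L(W) Δ ≥ m ‖Δ‖₂². Define the false positive and false negative sets FP := {l ∉ S⁰ : |Ṽ_l| ≥ τ} and FN := {l ∈ S⁰ : |Ṽ_l| < τ}. Then |FP| + |FN| ≤ (3γ/m)² · ( |S′ ∖ S⁰| + |S⁰ ∖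 S′| ). (Contraction of the misclassified index set across DC iterations, from Step 2 of the proof of Theorem 1; with γ ≤ m/6 the count at least quarters at each iteration.) -/
open scoped Classical

section aux

lemma taylor_lb (g g' g'' : ℝ → ℝ)
    (hg : ∀ t, HasDerivAt g (g' t) t) (hg' : ∀ t, HasDerivAt g' (g'' t) t)
    (K : ℝ) (hK : ∀ t ∈ Set.Icc (0:ℝ) 1, K ≤ g'' t) :
    g 0 + g' 0 + K / 2 ≤ g 1 := by
  set p : ℝ → ℝ := fun t => g' t - g' 0 - K * t with hp_def
  have hp : ∀ t, HasDerivAt p (g'' t - K) t := by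
    intro t
    have h := ((hg' t).sub_const (g' 0)).sub ((hasDerivAt_id t).const_mul K)
    simp only [mul_one] at h
    exact h
  have hpmono : MonotoneOn p (Set.Icc (0:ℝ) 1) := by
    apply monotoneOn_of_deriv_nonneg (convex_Icc 0 1)
    · exact fun t _ => ((hp t).continuousAt).continuousWithinAt
    · exact fun t _ => ((hp t).differentiableAt).differentiableWithinAt
    · intro t ht
      rw [interior_Icc] at ht
      rw [(hp t).deriv]
      have := hK t ⟨le_of_lt ht.1, le_of_lt ht.2⟩
      linarith
  have hpnn : ∀ t ∈ Set.Icc (0:ℝ) 1, 0 ≤ p t := by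
    intro t ht
    have := hpmono (Set.left_mem_Icc.2 zero_le_one) ht ht.1
    simpa [hp_def] using this
  set r : ℝ → ℝ := fun t => g t - g 0 - g' 0 * t - K * t ^ 2 / 2 with hr_def
  have hr : ∀ t, HasDerivAt r (p t) t := by
    intro t
    have h1 : HasDerivAt (fun t : ℝ => K * t ^ 2 / 2) (K * t) t := by
      have := ((hasDerivAt_pow 2 t).const_mul K).div_const 2
      simpa using this.congr_deriv (by ring)
    have := (((hg t).sub_const (g 0)).sub ((hasDerivAt_id t).const_mul (g' 0))).sub h1
    have h2 := this.congr_deriv (show _ = p t by simp only [hp_def]; ring)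
    exact h2
  have hrmono : MonotoneOn r (Set.Icc (0:ℝ) 1) := by
    apply monotoneOn_of_deriv_nonneg (convex_Icc 0 1)
    · exact fun t _ => ((hr t).continuousAt).continuousWithinAt
    · exact fun t _ => ((hr t).differentiableAt).differentiableWithinAt
    · intro t ht
      rw [interior_Icc] at ht
      rw [(hr t).deriv]
      exact hpnn t ⟨le_of_lt ht.1, le_of_lt ht.2⟩
  have := hrmono (Set.left_mem_Icc.2 zero_le_one) (Set.right_mem_Icc.2 zero_le_one) zero_le_one
  simp only [hr_def] at this
  nlinarith [this]

lemma negLogLik_contDiff (n q : ℕ) (X : Matrix (Fin n) (Fin q) ℝ)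
    (Y : Fin n → ℝ) (A : ℝ → ℝ) (hA2 : ContDiff ℝ 2 A) :
    ContDiff ℝ 2 (negLogLik n q X Y A) := by
  unfold negLogLik
  apply ContDiff.mul contDiff_const
  apply ContDiff.sum
  intro i _
  have hlin : ContDiff ℝ 2 (fun V : Fin q → ℝ => ∑ j, V j * X i j) := by
    apply ContDiff.sum
    intro j _
    exact ((ContinuousLinearMap.proj j : (Fin q → ℝ) →L[ℝ] ℝ).contDiff).mul contDiff_const
  exact (contDiff_const.mul hlin).add (hA2.comp hlin)

variable {q : ℕ}

lemma line_deriv1 (f : (Fin q → ℝ) → ℝ) (hf : ContDiff ℝ 2 f) (V Δ : Fin q → ℝ) (t : ℝ) :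
    HasDerivAt (fun t : ℝ => f (V + t • Δ)) (fderiv ℝ f (V + t • Δ) Δ) t := by
  have hc : HasDerivAt (fun t : ℝ => V + t • Δ) Δ t := by
    simpa using ((hasDerivAt_id t).smul_const Δ).const_add V
  have hdf : DifferentiableAt ℝ f (V + t • Δ) :=
    (hf.differentiable (by norm_num)) _
  exact hdf.hasFDerivAt.comp_hasDerivAt t hc

lemma line_deriv2 (f : (Fin q → ℝ) → ℝ) (hf : ContDiff ℝ 2 f) (V Δ : Fin q → ℝ) (t : ℝ) :
    HasDerivAt (fun t : ℝ => fderiv ℝ f (V + t • Δ) Δ)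
      (fderiv ℝ (fderiv ℝ f) (V + t • Δ) Δ Δ) t := by
  have hc : HasDerivAt (fun t : ℝ => V + t • Δ) Δ t := by
    simpa using ((hasDerivAt_id t).smul_const Δ).const_add V
  have hf1 : ContDiff ℝ 1 (fderiv ℝ f) := hf.fderiv_right (by norm_num)
  have hdf : DifferentiableAt ℝ (fderiv ℝ f) (V + t • Δ) :=
    (hf1.differentiable (by norm_num)) _
  have h1 : HasDerivAt (fun t : ℝ => fderiv ℝ f (V + t • Δ))
      (fderiv ℝ (fderiv ℝ f) (V + t • Δ) Δ) t :=
    hdf.hasFDerivAt.comp_hasDerivAt t hc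
  have h2 := h1.clm_apply (hasDerivAt_const t Δ)
  simpa using h2

lemma negLogLik_line_deriv0 (n : ℕ) (X : Matrix (Fin n) (Fin q) ℝ)
    (Y : Fin n → ℝ) (A : ℝ → ℝ) (hA2 : ContDiff ℝ 2 A) (V Δ : Fin q → ℝ) :
    HasDerivAt (fun t : ℝ => negLogLik n q X Y A (V + t • Δ))
      ((1 / (n : ℝ)) * ∑ i, ((∑ j, Δ j * X i j) *
        (-(Y i) + deriv A (∑ j, V j * X i j)))) 0 := by
  have hfun : ∀ t : ℝ, negLogLik n q X Y A (V + t • Δ) =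
      (1 / (n : ℝ)) * ∑ i, (-(Y i) * ((∑ j, V j * X i j) + t * (∑ j, Δ j * X i j))
        + A ((∑ j, V j * X i j) + t * (∑ j, Δ j * X i j))) := by
    intro t
    unfold negLogLik
    congr 1
    apply Finset.sum_congr rfl
    intro i _
    have : ∑ j, (V + t • Δ) j * X i j
        = (∑ j, V j * X i j) + t * (∑ j, Δ j * X i j) := by
      rw [Finset.mul_sum, ← Finset.sum_add_distrib]
      apply Finset.sum_congr rfl
      intro j _
      simp [Pi.add_apply, Pi.smul_apply, smul_eq_mul]
      ring
    rw [this]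
  rw [funext hfun]
  have hterm : ∀ i : Fin n, HasDerivAt
      (fun t : ℝ => -(Y i) * ((∑ j, V j * X i j) + t * (∑ j, Δ j * X i j))
        + A ((∑ j, V j * X i j) + t * (∑ j, Δ j * X i j)))
      ((∑ j, Δ j * X i j) * (-(Y i) + deriv A (∑ j, V j * X i j))) 0 := by
    intro i
    set a := ∑ j, V j * X i j
    set b := ∑ j, Δ j * X i j
    have hu : HasDerivAt (fun t : ℝ => a + t * b) b 0 := by
      simpa using ((hasDerivAt_id (0:ℝ)).mul_const b).const_add a
    have hA' : HasDerivAt A (deriv A (a + 0 * b)) (a + 0 * b) :=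
      ((hA2.differentiable (by norm_num)) _).hasDerivAt
    have := (hu.const_mul (-(Y i))).add (hA'.comp 0 hu)
    simp only [zero_mul, add_zero] at this
    exact this.congr_deriv (by ring)
  simpa using (HasDerivAt.sum (fun i _ => hterm i)).const_mul (1 / (n:ℝ))

end aux

set_option maxHeartbeats 1000000 in
/-- **Contraction of the misclassified index set across DC iterations**
(Step 2 of the proof of Theorem 1).  With the oracle estimator `V̂⁰` close to
the true `V⁰` in sup norm, minimum signal strength `2.5τ` on the support `S⁰`,
global minimality of `Ṽ` for the weighted-ℓ1 objective with unpenalized set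
`S'`, and restricted strong convexity along the segment, the false positives
`FP = {l ∉ S⁰ : |Ṽ_l| ≥ τ}` and false negatives `FN = {l ∈ S⁰ : |Ṽ_l| < τ}`
satisfy `|FP| + |FN| ≤ (3γ/m)² (|S' ∖ S⁰| + |S⁰ ∖ S'|)`. -/
theorem dc_misclassification_contraction
    (n q : ℕ) (hn : 0 < n) (hq : 0 < q)
    (X : Matrix (Fin n) (Fin q) ℝ) (Y : Fin n → ℝ)
    (A : ℝ → ℝ) (hA : ConvexOn ℝ Set.univ A) (hA2 : ContDiff ℝ 2 A)
    (φ : ℝ → ℝ) (hφ : φ = deriv A)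
    (γ τ m : ℝ) (hγ : 0 < γ) (hτ : 0 < τ) (hm : 0 < m)
    (S0 S' : Finset (Fin q))
    (V0 : Fin q → ℝ)
    (hV0supp : ∀ l, V0 l ≠ 0 ↔ l ∈ S0)
    (hsignal : ∀ l ∈ S0, 2.5 * τ ≤ |V0 l|)
    (Vhat0 : Fin q → ℝ)
    (hsupp : ∀ l ∉ S0, Vhat0 l = 0)
    (hKKT : ∀ l ∈ S0, ∑ i, X i l * (Y i - φ (∑ j, Vhat0 j * X i j)) = 0)
    (hgrad : ∀ l, |(∑ i, X i l * (Y i - φ (∑ j, Vhat0 j * X i j))) / (n : ℝ)|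
        ≤ γ * τ / 2)
    (hclose : ∀ l, |Vhat0 l - V0 l| ≤ τ / 2)
    (Vtil : Fin q → ℝ)
    (hmin : ∀ V : Fin q → ℝ,
      negLogLik n q X Y A Vtil + γ * τ * ∑ l ∈ S'ᶜ, |Vtil l| ≤
        negLogLik n q X Y A V + γ * τ * ∑ l ∈ S'ᶜ, |V l|)
    (hRSC : ∀ t ∈ Set.Icc (0 : ℝ) 1,
      m * ∑ l, (Vtil l - Vhat0 l) ^ 2 ≤
        iteratedFDeriv ℝ 2 (negLogLik n q X Y A)
          (Vhat0 + t • (Vtil - Vhat0)) ![Vtil - Vhat0, Vtil - Vhat0]) :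
    ((Finset.univ.filter fun l => l ∉ S0 ∧ τ ≤ |Vtil l|).card
        + (S0.filter fun l => |Vtil l| < τ).card : ℝ) ≤
      (3 * γ / m) ^ 2 * (((S' \ S0).card : ℝ) + ((S0 \ S').card : ℝ)) := by
  subst hφ
  set f := negLogLik n q X Y A with hf_def
  set Δ : Fin q → ℝ := Vtil - Vhat0 with hΔ
  have hΔl : ∀ l, Δ l = Vtil l - Vhat0 l := fun l => rfl
  set D : ℝ := ∑ l, (Δ l) ^ 2 with hD_def
  have hf : ContDiff ℝ 2 f := negLogLik_contDiff n q X Y A hA2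
  set g1 : ℝ → ℝ := fun t => fderiv ℝ f (Vhat0 + t • Δ) Δ with hg1_def
  -- Taylor lower bound
  have hRSC' : ∀ t ∈ Set.Icc (0:ℝ) 1,
      m * D ≤ fderiv ℝ (fderiv ℝ f) (Vhat0 + t • Δ) Δ Δ := by
    intro t ht
    have := hRSC t ht
    rwa [iteratedFDeriv_two_apply] at this
  have htaylor : f (Vhat0 + (0:ℝ) • Δ) + g1 0 + m * D / 2 ≤ f (Vhat0 + (1:ℝ) • Δ) :=
    taylor_lb (fun t => f (Vhat0 + t • Δ)) g1
      (fun t => fderiv ℝ (fderiv ℝ f) (Vhat0 + t • Δ) Δ Δ)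
      (line_deriv1 f hf Vhat0 Δ) (line_deriv2 f hf Vhat0 Δ) (m * D) hRSC'
  have h0 : Vhat0 + (0:ℝ) • Δ = Vhat0 := by simp
  have h1 : Vhat0 + (1:ℝ) • Δ = Vtil := by rw [one_smul, hΔ]; abel
  rw [h0, h1] at htaylor
  -- explicit value of g1 0
  have hexp := negLogLik_line_deriv0 n X Y A hA2 Vhat0 Δ
  have hg10 : g1 0 = (1 / (n : ℝ)) * ∑ i, ((∑ j, Δ j * X i j) *
      (-(Y i) + deriv A (∑ j, Vhat0 j * X i j))) := by
    have := line_deriv1 f hf Vhat0 Δ 0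
    exact this.unique hexp
  -- gradient coordinates
  set G : Fin q → ℝ :=
    fun l => (∑ i, X i l * (Y i - deriv A (∑ j, Vhat0 j * X i j))) / (n : ℝ) with hG_def
  have hG0 : ∀ l ∈ S0, G l = 0 := by
    intro l hl
    rw [hG_def]
    simp only [hKKT l hl, zero_div]
  have hGabs : ∀ l, |G l| ≤ γ * τ / 2 := fun l => hgrad l
  -- rewrite g1 0 as a sum over coordinates
  have hneg : -g1 0 = ∑ l, Δ l * G l := by
    have hswap : (1 / (n : ℝ)) * ∑ i, ((∑ j, Δ j * X i j) *
        (-(Y i) + deriv A (∑ j, Vhat0 j * X i j)))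
        = ∑ l, ∑ i, Δ l * (X i l * (-(Y i) + deriv A (∑ j, Vhat0 j * X i j)) / (n : ℝ)) := by
      rw [Finset.mul_sum]
      rw [show (∑ i, 1 / (n:ℝ) * ((∑ j, Δ j * X i j) *
          (-(Y i) + deriv A (∑ j, Vhat0 j * X i j))))
          = ∑ i, ∑ l, Δ l * (X i l * (-(Y i) + deriv A (∑ j, Vhat0 j * X i j)) / (n : ℝ))
        from Finset.sum_congr rfl fun i _ => by
          rw [Finset.sum_mul, Finset.mul_sum]
          exact Finset.sum_congr rfl fun j _ => by ring]
      exact Finset.sum_comm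
    have : g1 0 = ∑ l, -(Δ l * G l) := by
      rw [hg10, hswap]
      apply Finset.sum_congr rfl
      intro l _
      rw [← Finset.mul_sum, ← Finset.sum_div]
      have h2 : (∑ i, X i l * (-(Y i) + deriv A (∑ j, Vhat0 j * X i j)))
          = -∑ i, X i l * (Y i - deriv A (∑ j, Vhat0 j * X i j)) := by
        rw [← Finset.sum_neg_distrib]
        exact Finset.sum_congr rfl fun i _ => by ring
      rw [h2, hG_def]
      ring
    rw [this, Finset.sum_neg_distrib, neg_neg]
  have hbound : -g1 0 ≤ ∑ l, (if l ∈ S0 then 0 else |Δ l|) * (γ * τ / 2) := by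
    rw [hneg]
    apply Finset.sum_le_sum
    intro l _
    by_cases hl : l ∈ S0
    · simp [hl, hG0 l hl]
    · rw [if_neg hl]
      calc Δ l * G l ≤ |Δ l * G l| := le_abs_self _
        _ = |Δ l| * |G l| := abs_mul _ _
        _ ≤ |Δ l| * (γ * τ / 2) := mul_le_mul_of_nonneg_left (hGabs l) (abs_nonneg _)
  -- objective comparison
  have hobj := hmin Vhat0
  have hcompl : ∀ h : Fin q → ℝ, ∑ l ∈ S'ᶜ, h l = ∑ l, if l ∈ S' then 0 else h l := by
    intro h
    symm
    calc ∑ l, (if l ∈ S' then 0 else h l)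
        = ∑ l, (if l ∈ S'ᶜ then h l else 0) := by
          apply Finset.sum_congr rfl
          intro l _
          by_cases hl : l ∈ S' <;> simp [hl]
      _ = ∑ l ∈ Finset.univ ∩ S'ᶜ, h l := Finset.sum_ite_mem _ _ _
      _ = ∑ l ∈ S'ᶜ, h l := by rw [Finset.univ_inter]
  set T : Finset (Fin q) := (S' \ S0) ∪ (S0 \ S') with hT_def
  set STsum : ℝ := ∑ l ∈ T, |Δ l| with hST_def
  have hmain : m * D / 2 ≤ ∑ l, ((if l ∈ S0 then 0 else |Δ l|) * (γ * τ / 2)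
      + γ * τ * ((if l ∈ S' then 0 else |Vhat0 l|) - (if l ∈ S' then 0 else |Vtil l|))) := by
    rw [Finset.sum_add_distrib, ← Finset.mul_sum, Finset.sum_sub_distrib]
    rw [hcompl (fun l => |Vtil l|), hcompl (fun l => |Vhat0 l|)] at hobj
    linarith
  have hstep : ∀ l ∈ Finset.univ, ((if l ∈ S0 then 0 else |Δ l|) * (γ * τ / 2)
      + γ * τ * ((if l ∈ S' then 0 else |Vhat0 l|) - (if l ∈ S' then 0 else |Vtil l|)))
      ≤ (if l ∈ T then γ * τ * |Δ l| else 0) := by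
    intro l _
    have habs1 : |Vhat0 l| - |Vtil l| ≤ |Δ l| := by
      have h := abs_sub_abs_le_abs_sub (Vhat0 l) (Vtil l)
      rw [abs_sub_comm] at h
      rw [hΔl]
      exact h
    have hγτ : 0 ≤ γ * τ := by positivity
    have hTmem : l ∈ T ↔ (l ∈ S' ∧ l ∉ S0) ∨ (l ∈ S0 ∧ l ∉ S') := by
      simp [hT_def, Finset.mem_union, Finset.mem_sdiff]
    by_cases h0 : l ∈ S0 <;> by_cases h' : l ∈ S'
    · have : l ∉ T := by rw [hTmem]; tauto
      simp [h0, h', this]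
    · have : l ∈ T := by rw [hTmem]; tauto
      rw [if_pos this, if_pos h0, if_neg h', if_neg h']
      nlinarith [habs1]
    · have : l ∈ T := by rw [hTmem]; tauto
      rw [if_pos this, if_neg h0, if_pos h', if_pos h']
      nlinarith [abs_nonneg (Δ l)]
    · have hTn : l ∉ T := by rw [hTmem]; tauto
      rw [if_neg hTn, if_neg h0, if_neg h', if_neg h']
      have hv0 : Vhat0 l = 0 := hsupp l h0
      have : |Vtil l| = |Δ l| := by rw [hΔl, hv0, sub_zero]
      rw [hv0, this]
      simp only [abs_zero]
      nlinarith [abs_nonneg (Δ l)]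
  have e1 : ∑ l, (if l ∈ T then γ * τ * |Δ l| else 0) = γ * τ * STsum := by
    rw [hST_def, Finset.mul_sum]
    calc ∑ l, (if l ∈ T then γ * τ * |Δ l| else 0)
        = ∑ l ∈ Finset.univ ∩ T, γ * τ * |Δ l| := Finset.sum_ite_mem _ _ _
      _ = ∑ l ∈ T, γ * τ * |Δ l| := by rw [Finset.univ_inter]
  have hkey : m * D / 2 ≤ γ * τ * STsum :=
    hmain.trans ((Finset.sum_le_sum hstep).trans_eq e1)
  -- Cauchy-Schwarz
  have hsubD : ∑ l ∈ T, (Δ l) ^ 2 ≤ D :=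
    Finset.sum_le_sum_of_subset_of_nonneg (Finset.subset_univ T) fun i _ _ => sq_nonneg _
  have hCS : STsum ^ 2 ≤ (T.card : ℝ) * D := by
    calc STsum ^ 2 = (∑ l ∈ T, 1 * |Δ l|) ^ 2 := by rw [hST_def]; simp
      _ ≤ (∑ l ∈ T, (1:ℝ) ^ 2) * ∑ l ∈ T, |Δ l| ^ 2 :=
          Finset.sum_mul_sq_le_sq_mul_sq T _ _
      _ = (T.card : ℝ) * ∑ l ∈ T, (Δ l) ^ 2 := by simp [sq_abs]
      _ ≤ (T.card : ℝ) * D := by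
          exact mul_le_mul_of_nonneg_left hsubD (Nat.cast_nonneg _)
  -- misclassification count
  set FP := Finset.univ.filter fun l => l ∉ S0 ∧ τ ≤ |Vtil l| with hFP_def
  set FN := S0.filter fun l => |Vtil l| < τ with hFN_def
  have hdisj : Disjoint FP FN := by
    rw [Finset.disjoint_left]
    intro l hl hl'
    exact (Finset.mem_filter.1 hl).2.1 (Finset.mem_filter.1 (hFN_def ▸ hl')).1
  have hτΔ : ∀ l ∈ FP ∪ FN, τ ^ 2 ≤ (Δ l) ^ 2 := by
    intro l hl
    have hτle : τ ≤ |Δ l| := by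
      rcases Finset.mem_union.1 hl with h | h
      · obtain ⟨-, hns, hτv⟩ : l ∈ Finset.univ ∧ l ∉ S0 ∧ τ ≤ |Vtil l| := by
          simpa [hFP_def, Finset.mem_filter] using h
        have : |Δ l| = |Vtil l| := by rw [hΔl, hsupp l hns, sub_zero]
        linarith [this ▸ hτv]
      · obtain ⟨hls, hlt⟩ : l ∈ S0 ∧ |Vtil l| < τ := by
          simpa [hFN_def, Finset.mem_filter] using h
        have h1 : 2.5 * τ ≤ |V0 l| := hsignal l hls
        have h2 : |Vhat0 l - V0 l| ≤ τ / 2 := hclose l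
        have h3 : |V0 l| - |Vhat0 l| ≤ |Vhat0 l - V0 l| := by
          rw [abs_sub_comm]
          exact abs_sub_abs_le_abs_sub _ _
        have h4 : |Vhat0 l| - |Vtil l| ≤ |Δ l| := by
          have h := abs_sub_abs_le_abs_sub (Vhat0 l) (Vtil l)
          rw [abs_sub_comm] at h
          rw [hΔl]; exact h
        linarith
    calc τ ^ 2 ≤ |Δ l| ^ 2 := pow_le_pow_left₀ hτ.le hτle 2
      _ = (Δ l) ^ 2 := sq_abs _
  have hNle : τ ^ 2 * ((FP.card : ℝ) + (FN.card : ℝ)) ≤ D := by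
    calc τ ^ 2 * ((FP.card : ℝ) + (FN.card : ℝ)) = ∑ _l ∈ FP ∪ FN, τ ^ 2 := by
          rw [Finset.sum_const, Finset.card_union_of_disjoint hdisj]
          push_cast
          ring
      _ ≤ ∑ l ∈ FP ∪ FN, (Δ l) ^ 2 := Finset.sum_le_sum hτΔ
      _ ≤ D := Finset.sum_le_sum_of_subset_of_nonneg (Finset.subset_univ _)
          fun i _ _ => sq_nonneg _
  -- final arithmetic
  have hD0 : 0 ≤ D := Finset.sum_nonneg fun l _ => sq_nonneg _
  have hST0 : 0 ≤ STsum := Finset.sum_nonneg fun l _ => abs_nonneg _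
  have hTdisj : Disjoint (S' \ S0) (S0 \ S') := by
    rw [Finset.disjoint_left]
    intro l hl hl'
    exact (Finset.mem_sdiff.1 hl).2 (Finset.mem_sdiff.1 hl').1
  have hTc : (T.card : ℝ) = ((S' \ S0).card : ℝ) + ((S0 \ S').card : ℝ) := by
    rw [hT_def, Finset.card_union_of_disjoint hTdisj]
    push_cast
    ring
  have hTc0 : 0 ≤ (T.card : ℝ) := Nat.cast_nonneg _
  have hN0 : 0 ≤ (FP.card : ℝ) + (FN.card : ℝ) := by positivity
  rcases eq_or_lt_of_le hD0 with hDeq | hDpos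
  · have hτ2 : (0:ℝ) < τ ^ 2 := by positivity
    have h' : τ ^ 2 * ((FP.card : ℝ) + (FN.card : ℝ)) ≤ τ ^ 2 * 0 := by
      rw [mul_zero]; linarith [hNle]
    have hN : (FP.card : ℝ) + (FN.card : ℝ) ≤ 0 := le_of_mul_le_mul_left h' hτ2
    have hrhs : (0:ℝ) ≤ (3 * γ / m) ^ 2 * (((S' \ S0).card : ℝ) + ((S0 \ S').card : ℝ)) := by
      positivity
    exact hN.trans hrhs
  · have h4 : m * D ≤ 2 * γ * τ * STsum := by linarith
    have h5 : (m * D) ^ 2 ≤ (2 * γ * τ * STsum) ^ 2 := by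
      apply pow_le_pow_left₀ (by positivity) h4
    have h6 : m ^ 2 * D ≤ 4 * γ ^ 2 * τ ^ 2 * (T.card : ℝ) := by
      have h7 : 4 * γ ^ 2 * τ ^ 2 * STsum ^ 2 ≤ 4 * γ ^ 2 * τ ^ 2 * ((T.card : ℝ) * D) :=
        mul_le_mul_of_nonneg_left hCS (by positivity)
      have h8 : m ^ 2 * D * D ≤ 4 * γ ^ 2 * τ ^ 2 * (T.card : ℝ) * D := by nlinarith
      exact le_of_mul_le_mul_right h8 hDpos
    have h9 : (FP.card : ℝ) + (FN.card : ℝ) ≤ 9 * γ ^ 2 / m ^ 2 * (T.card : ℝ) := by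
      rw [div_mul_eq_mul_div, le_div_iff₀ (by positivity : (0:ℝ) < m ^ 2)]
      have h10 : τ ^ 2 * (((FP.card : ℝ) + (FN.card : ℝ)) * m ^ 2)
          ≤ τ ^ 2 * (9 * γ ^ 2 * (T.card : ℝ)) := by nlinarith
      have hτ2 : (0:ℝ) < τ ^ 2 := by positivity
      exact le_of_mul_le_mul_left h10 hτ2
    rw [hTc] at h9
    push_cast
    calc (FP.card : ℝ) + (FN.card : ℝ)
        ≤ 9 * γ ^ 2 / m ^ 2 * (((S' \ S0).card : ℝ) + ((S0 \ S').card : ℝ)) := h9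
      _ = (3 * γ / m) ^ 2 * (((S' \ S0).card : ℝ) + ((S0 \ S').card : ℝ)) := by
          rw [div_pow, mul_pow]
          norm_num
end

section
/- Assume: (i) V⁰ ∈ ℝ^q has support S⁰ with K⁰ := |S⁰| ≥ 1 and min_{l ∈ S⁰} |V⁰_l| ≥ 2.5 τ for some τ > 0; (ii) V̂⁰ ∈ ℝ^q is supported on S⁰, satisfies the oracle first-order conditions (Xᵀ(Y − φ∘(X V̂⁰)))_l = 0 for all l ∈ S⁰, and ‖Xᵀ(Y − φ∘(X V̂⁰)) / n‖∞ ≤ γτ/2 and ‖V̂⁰ − V⁰‖∞ ≤ τ/2, where 0 < γ ≤ m/6 for some m > 0; (iii) restricted strong convexity: for every Δ ∈ ℝ^q for which there exists A ⊆ {1,…,q} with |A| ≤ 2K⁰ and ‖Δ_{Aᶜ}‖₁ ≤ 3 ‖Δ_A‖₁, and for every point W on the line segment joining V̂⁰ and V̂⁰ + Δ, Δᵀ ∇²L(W) Δ ≥ m ‖Δ‖₂²; (iv) (Ṽ^[t])_{t ≥ 0} is a sequence in ℝ^q such that |{l : |Ṽ^[0]_l| ≥ τ}| ≤ K⁰ and,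 for each t ≥ 1, Ṽ^[t] is a global minimizer over ℝ^q of V ↦ L(V) + γτ Σ_{l : |Ṽ^[t−1]_l| < τ} |V_l| (the weighted-ℓ1 subproblem of the DC iteration of Algorithm 1). Then for every t ≥ 1 + ⌈log(2K⁰)/log 4⌉, the thresholded support is exactly recovered: {l : |Ṽ^[t]_l| ≥ τ} = S⁰. (Deterministic core of Theorem 1: on the event E_j, the DC algorithm recovers the true support of the fidelity-model coefficients within finitely many iterations.) -/
open scoped Classical

namespace DCR

open Finset

variable {n q : ℕ} (X : Matrix (Fin n) (Fin q) ℝ) (Y : Fin n → ℝ) (A : ℝ → ℝ)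

noncomputable def lin (i : Fin n) : (Fin q → ℝ) →L[ℝ] ℝ :=
  ∑ j, (X i j) • (ContinuousLinearMap.proj j : (Fin q → ℝ) →L[ℝ] ℝ)

lemma lin_apply (i : Fin n) (V : Fin q → ℝ) : lin X i V = ∑ j, V j * X i j := by
  simp [lin, mul_comm]

lemma negLogLik_eq (V : Fin q → ℝ) :
    negLogLik n q X Y A V = (1 / (n : ℝ)) * ∑ i, (-(Y i) * lin X i V + A (lin X i V)) := by
  simp [negLogLik, lin_apply]

noncomputable def gradC (W : Fin q → ℝ) : (Fin q → ℝ) →L[ℝ] ℝ :=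
  (1 / (n : ℝ)) • ∑ i, (deriv A (lin X i W) - Y i) • lin X i

noncomputable def hessC (W : Fin q → ℝ) : (Fin q → ℝ) →L[ℝ] ((Fin q → ℝ) →L[ℝ] ℝ) :=
  (1 / (n : ℝ)) • ∑ i, ((deriv (deriv A) (lin X i W)) • lin X i).smulRight (lin X i)

lemma gradC_apply (W Δ : Fin q → ℝ) :
    gradC X Y A W Δ = (1 / (n : ℝ)) * ∑ i, (deriv A (lin X i W) - Y i) * lin X i Δ := by
  simp [gradC, ContinuousLinearMap.sum_apply, smul_eq_mul]

lemma hessC_apply (W Δ₁ Δ₂ : Fin q → ℝ) :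
    hessC X A W Δ₁ Δ₂
      = (1 / (n : ℝ)) * ∑ i, deriv (deriv A) (lin X i W) * (lin X i Δ₁ * lin X i Δ₂) := by
  simp [hessC, ContinuousLinearMap.sum_apply, smul_eq_mul, mul_assoc]

lemma gradC_sum (W Δ : Fin q → ℝ) :
    gradC X Y A W Δ
      = -∑ l, Δ l * ((∑ i, X i l * (Y i - deriv A (∑ j, W j * X i j))) / (n : ℝ)) := by
  rw [gradC_apply]
  have key : ∀ i, (deriv A (lin X i W) - Y i) * lin X i Δ
      = ∑ l, Δ l * (X i l * (deriv A (∑ j, W j * X i j) - Y i)) := by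
    intro i
    rw [lin_apply, lin_apply, Finset.mul_sum]
    exact Finset.sum_congr rfl fun l _ => by ring
  simp only [key]
  simp only [Finset.mul_sum]
  rw [Finset.sum_comm, ← Finset.sum_neg_distrib]
  refine Finset.sum_congr rfl fun l _ => ?_
  have hh : (∑ i, X i l * (Y i - deriv A (∑ j, W j * X i j))) / (n:ℝ)
      = ∑ i, (X i l * (Y i - deriv A (∑ j, W j * X i j))) * (n:ℝ)⁻¹ := by
    rw [div_eq_mul_inv, Finset.sum_mul]
  rw [hh, Finset.mul_sum, ← Finset.sum_neg_distrib]
  refine Finset.sum_congr rfl fun i _ => ?_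
  ring

lemma hasFDerivAt_L (hA2 : ContDiff ℝ 2 A) (W : Fin q → ℝ) :
    HasFDerivAt (negLogLik n q X Y A) (gradC X Y A W) W := by
  have hAd : Differentiable ℝ A := hA2.differentiable (by norm_num)
  have h1 : ∀ i : Fin n,
      HasFDerivAt (fun V => -(Y i) * lin X i V + A (lin X i V))
        ((-(Y i)) • lin X i + (deriv A (lin X i W)) • lin X i) W := by
    intro i
    have ha : HasFDerivAt (fun V => -(Y i) * lin X i V) ((-(Y i)) • lin X i) W :=
      ((lin X i).hasFDerivAt).const_mul (-(Y i))
    have hb : HasFDerivAt (fun V => A (lin X i V)) ((deriv A (lin X i W)) • lin X i) W :=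
      (hAd (lin X i W)).hasDerivAt.comp_hasFDerivAt W ((lin X i).hasFDerivAt)
    exact ha.add hb
  have hsum : HasFDerivAt (fun V => ∑ i, (-(Y i) * lin X i V + A (lin X i V)))
      (∑ i, ((-(Y i)) • lin X i + (deriv A (lin X i W)) • lin X i)) W :=
    HasFDerivAt.fun_sum (fun i _ => h1 i)
  have h2 := hsum.const_mul (1 / (n : ℝ))
  have heq : (1 / (n : ℝ)) • (∑ i, ((-(Y i)) • lin X i + (deriv A (lin X i W)) • lin X i))
      = gradC X Y A W := by
    rw [gradC]
    congr 1
    refine Finset.sum_congr rfl fun i _ => ?_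
    ext V
    simp [smul_eq_mul]
    ring
  rw [heq] at h2
  have h3 : HasFDerivAt (fun V => (1 / (n : ℝ)) * ∑ i, (-(Y i) * lin X i V + A (lin X i V)))
      (gradC X Y A W) W := h2
  convert h3 using 1
  funext V
  exact negLogLik_eq X Y A V

lemma contDiff_derivA (hA2 : ContDiff ℝ 2 A) : ContDiff ℝ 1 (deriv A) := by
  have h2 : ContDiff ℝ ((1:ℕ)+1) A := by exact_mod_cast hA2
  exact (contDiff_succ_iff_deriv.mp h2).2.2

lemma hasFDerivAt_gradC (hA2 : ContDiff ℝ 2 A) (W : Fin q → ℝ) :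
    HasFDerivAt (fun W' => gradC X Y A W') (hessC X A W) W := by
  have hd1 : Differentiable ℝ (deriv A) :=
    (contDiff_derivA A hA2).differentiable (by norm_num)
  have h1 : ∀ i : Fin n,
      HasFDerivAt (fun W' => (deriv A (lin X i W') - Y i) • lin X i)
        (((deriv (deriv A) (lin X i W)) • lin X i).smulRight (lin X i)) W := by
    intro i
    have hc : HasFDerivAt (fun W' => deriv A (lin X i W') - Y i)
        ((deriv (deriv A) (lin X i W)) • lin X i) W := by
      have := (hd1 (lin X i W)).hasDerivAt.comp_hasFDerivAt W ((lin X i).hasFDerivAt)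
      exact this.sub_const (Y i)
    exact hc.smul_const (lin X i)
  have hsum := HasFDerivAt.fun_sum (u := Finset.univ) (fun i (_ : i ∈ Finset.univ) => h1 i)
  exact hsum.const_smul (1 / (n : ℝ))

lemma fderiv_L_eq (hA2 : ContDiff ℝ 2 A) :
    fderiv ℝ (negLogLik n q X Y A) = fun W => gradC X Y A W := by
  funext W
  exact (hasFDerivAt_L X Y A hA2 W).fderiv

lemma hess_eq (hA2 : ContDiff ℝ 2 A) (W Δ : Fin q → ℝ) :
    iteratedFDeriv ℝ 2 (negLogLik n q X Y A) W ![Δ, Δ] = hessC X A W Δ Δ := by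
  rw [iteratedFDeriv_two_apply]
  rw [fderiv_L_eq X Y A hA2]
  rw [(hasFDerivAt_gradC X Y A hA2 W).fderiv]
  simp

lemma hasDerivAt_lineSeg (V₀ Δ : Fin q → ℝ) (s : ℝ) :
    HasDerivAt (fun s : ℝ => V₀ + s • Δ) Δ s := by
  simpa using ((hasDerivAt_id s).smul_const Δ).const_add V₀

lemma hasDerivAt_Lline (hA2 : ContDiff ℝ 2 A) (V₀ Δ : Fin q → ℝ) (s : ℝ) :
    HasDerivAt (fun s : ℝ => negLogLik n q X Y A (V₀ + s • Δ))
      (gradC X Y A (V₀ + s • Δ) Δ) s := by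
  have h := (hasFDerivAt_L X Y A hA2 (V₀ + s • Δ)).comp_hasDerivAt_of_eq s
    (hasDerivAt_lineSeg V₀ Δ s) rfl
  simpa [Function.comp_def] using h

lemma hasDerivAt_gradline (hA2 : ContDiff ℝ 2 A) (V₀ Δ : Fin q → ℝ) (s : ℝ) :
    HasDerivAt (fun s : ℝ => gradC X Y A (V₀ + s • Δ) Δ)
      (hessC X A (V₀ + s • Δ) Δ Δ) s := by
  have h1 : HasDerivAt (fun s : ℝ => gradC X Y A (V₀ + s • Δ))
      (hessC X A (V₀ + s • Δ) Δ) s := by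
    have h := (hasFDerivAt_gradC X Y A hA2 (V₀ + s • Δ)).comp_hasDerivAt_of_eq s
      (hasDerivAt_lineSeg V₀ Δ s) rfl
    simpa [Function.comp_def] using h
  have h2 := h1.clm_apply (hasDerivAt_const s Δ)
  simpa using h2

lemma taylor_lb (hA2 : ContDiff ℝ 2 A) (V₀ Δ : Fin q → ℝ) (μ : ℝ)
    (hμ : ∀ s ∈ Set.Icc (0:ℝ) 1, μ ≤ hessC X A (V₀ + s • Δ) Δ Δ) :
    negLogLik n q X Y A V₀ + gradC X Y A V₀ Δ + μ / 2
      ≤ negLogLik n q X Y A (V₀ + Δ) := by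
  set L := negLogLik n q X Y A with hL
  set G : ℝ → ℝ := fun s => gradC X Y A (V₀ + s • Δ) Δ - μ * s with hG
  have hGd : ∀ s : ℝ, HasDerivAt G (hessC X A (V₀ + s • Δ) Δ Δ - μ) s := by
    intro s
    have hms : HasDerivAt (fun s : ℝ => μ * s) μ s := by
      simpa using (hasDerivAt_id s).const_mul μ
    exact (hasDerivAt_gradline X Y A hA2 V₀ Δ s).sub hms
  have hGmono : MonotoneOn G (Set.Icc (0:ℝ) 1) := by
    refine monotoneOn_of_deriv_nonneg (convex_Icc 0 1)
      (fun s _ => ((hGd s).continuousAt).continuousWithinAt)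
      (fun s hs => ((hGd s).differentiableAt).differentiableWithinAt) ?_
    intro s hs
    rw [interior_Icc] at hs
    rw [(hGd s).deriv]
    have := hμ s ⟨hs.1.le, hs.2.le⟩
    linarith
  set F : ℝ → ℝ := fun s => L (V₀ + s • Δ) - s * (gradC X Y A V₀ Δ) - μ * s ^ 2 / 2 with hF
  have hFd : ∀ s : ℝ, HasDerivAt F (G s - gradC X Y A V₀ Δ) s := by
    intro s
    have h1 := hasDerivAt_Lline X Y A hA2 V₀ Δ s
    have h2 : HasDerivAt (fun s : ℝ => s * (gradC X Y A V₀ Δ)) (gradC X Y A V₀ Δ) s := by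
      simpa using (hasDerivAt_id s).mul_const (gradC X Y A V₀ Δ)
    have h3 : HasDerivAt (fun s : ℝ => μ * s ^ 2 / 2) (μ * s) s := by
      have := ((hasDerivAt_pow 2 s).const_mul μ).div_const 2
      exact this.congr_deriv (by norm_num; ring)
    have h4 := (h1.sub h2).sub h3
    refine h4.congr_deriv ?_
    simp only [hG]
    ring
  have hFmono : MonotoneOn F (Set.Icc (0:ℝ) 1) := by
    refine monotoneOn_of_deriv_nonneg (convex_Icc 0 1)
      (fun s _ => ((hFd s).continuousAt).continuousWithinAt)
      (fun s hs => ((hFd s).differentiableAt).differentiableWithinAt) ?_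
    intro s hs
    rw [interior_Icc] at hs
    rw [(hFd s).deriv]
    have h0 : G 0 ≤ G s :=
      hGmono (Set.mem_Icc.mpr ⟨le_rfl, zero_le_one⟩)
        (Set.mem_Icc.mpr ⟨hs.1.le, hs.2.le⟩) hs.1.le
    have hg0 : G 0 = gradC X Y A V₀ Δ := by simp [hG]
    linarith
  have h01 := hFmono (Set.mem_Icc.mpr ⟨le_rfl, zero_le_one⟩)
    (Set.mem_Icc.mpr ⟨zero_le_one, le_rfl⟩) zero_le_one
  simp only [hF, zero_smul, add_zero, one_smul, zero_mul, one_mul, one_pow] at h01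
  linarith

lemma mono_deriv_nonneg {g : ℝ → ℝ} (hg : Monotone g) {x : ℝ}
    (hd : DifferentiableAt ℝ g x) : 0 ≤ deriv g x := by
  have h := hd.hasDerivAt
  rw [hasDerivAt_iff_tendsto_slope] at h
  refine ge_of_tendsto h ?_
  filter_upwards [self_mem_nhdsWithin] with y hy
  rcases lt_or_gt_of_ne (Ne.symm (α := ℝ) hy) with hlt | hlt
  · rw [slope_def_field]
    exact div_nonneg (by linarith [hg hlt.le]) (by linarith)
  · rw [slope_def_field]
    exact div_nonneg_of_nonpos (by linarith [hg hlt.le]) (by linarith)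

lemma dderivA_nonneg {A : ℝ → ℝ} (hA : ConvexOn ℝ Set.univ A) (hA2 : ContDiff ℝ 2 A)
    (x : ℝ) : 0 ≤ deriv (deriv A) x := by
  have hAd : Differentiable ℝ A := hA2.differentiable (by norm_num)
  have h2 : ContDiff ℝ ((1:ℕ)+1) A := by exact_mod_cast hA2
  have hd1 : Differentiable ℝ (deriv A) :=
    ((contDiff_succ_iff_deriv.mp h2).2.2).differentiable (by norm_num)
  have hmono : Monotone (deriv A) := by
    have := hA.monotoneOn_deriv (fun z _ => hAd z)
    exact monotoneOn_univ.mp this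
  exact mono_deriv_nonneg hmono (hd1 x)

lemma hessC_nonneg (hA : ConvexOn ℝ Set.univ A) (hA2 : ContDiff ℝ 2 A)
    (W Δ : Fin q → ℝ) : 0 ≤ hessC X A W Δ Δ := by
  rw [hessC_apply]
  refine mul_nonneg (by positivity) (Finset.sum_nonneg fun i _ => ?_)
  have h1 := dderivA_nonneg hA hA2 (lin X i W)
  nlinarith [sq_nonneg (lin X i Δ)]

lemma cs_l1 (s : Finset (Fin q)) (f : Fin q → ℝ) :
    (∑ l ∈ s, |f l|) ^ 2 ≤ (s.card : ℝ) * ∑ l ∈ s, f l ^ 2 := by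
  have h := Finset.sum_mul_sq_le_sq_mul_sq s (fun _ => (1:ℝ)) (fun l => |f l|)
  simpa [sq_abs] using h

end DCR

set_option maxHeartbeats 1000000 in
/-- One-step contraction of the misclassified set for the DC iteration. -/
theorem DCR.step_lemma {n q : ℕ} (X : Matrix (Fin n) (Fin q) ℝ) (Y : Fin n → ℝ)
    (A : ℝ → ℝ) (hA : ConvexOn ℝ Set.univ A) (hA2 : ContDiff ℝ 2 A)
    (γ τ m : ℝ) (hτ : 0 < τ) (hm : 0 < m) (hγ : 0 < γ) (hγm : γ ≤ m / 6)
    (S0 : Finset (Fin q)) (K0 : ℕ) (hK0 : K0 = S0.card)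
    (Vhat0 : Fin q → ℝ)
    (hsupp : ∀ l ∉ S0, Vhat0 l = 0)
    (hVhat2 : ∀ l ∈ S0, 2*τ ≤ |Vhat0 l|)
    (hgl0 : ∀ l ∈ S0, (∑ i, X i l * (Y i - deriv A (∑ j, Vhat0 j * X i j))) / (n:ℝ) = 0)
    (hglb : ∀ l, |(∑ i, X i l * (Y i - deriv A (∑ j, Vhat0 j * X i j))) / (n:ℝ)| ≤ γ*τ/2)
    (hRSC : ∀ Δ : Fin q → ℝ,
      (∃ Aset : Finset (Fin q), Aset.card ≤ 2 * K0 ∧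
          ∑ l ∈ Asetᶜ, |Δ l| ≤ 3 * ∑ l ∈ Aset, |Δ l|) →
      ∀ t ∈ Set.Icc (0 : ℝ) 1,
        m * ∑ l, Δ l ^ 2 ≤
          iteratedFDeriv ℝ 2 (negLogLik n q X Y A) (Vhat0 + t • Δ) ![Δ, Δ])
    (Vprev Vnext : Fin q → ℝ)
    (hFc : ((Finset.univ.filter fun l => τ ≤ |Vprev l|) \ S0).card ≤ K0)
    (hmin : negLogLik n q X Y A Vnext
          + γ * τ * ∑ l ∈ Finset.univ.filter (fun l => |Vprev l| < τ), |Vnext l| ≤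
        negLogLik n q X Y A Vhat0
          + γ * τ * ∑ l ∈ Finset.univ.filter (fun l => |Vprev l| < τ), |Vhat0 l|) :
    ((((S0 ∩ Finset.univ.filter fun l => |Vnext l| < τ)
        ∪ ((Finset.univ.filter fun l => τ ≤ |Vnext l|) \ S0)).card : ℝ))
      ≤ (((S0 ∩ Finset.univ.filter fun l => |Vprev l| < τ)
        ∪ ((Finset.univ.filter fun l => τ ≤ |Vprev l|) \ S0)).card : ℝ) / 9 := by
  classical
  set Bs := Finset.univ.filter (fun l => |Vprev l| < τ) with hBs
  set Ts := Finset.univ.filter (fun l => τ ≤ |Vprev l|) with hTs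
  set Bn := Finset.univ.filter (fun l => |Vnext l| < τ) with hBn
  set Tn := Finset.univ.filter (fun l => τ ≤ |Vnext l|) with hTn
  set Δ : Fin q → ℝ := fun l => Vnext l - Vhat0 l with hΔ
  have hVD : Vhat0 + Δ = Vnext := by funext l; simp [hΔ]
  set a := ∑ l ∈ S0 ∩ Bs, |Δ l| with ha
  set b := ∑ l ∈ Bs \ S0, |Δ l| with hb
  set c := ∑ l ∈ Ts \ S0, |Δ l| with hc
  have ha0 : 0 ≤ a := Finset.sum_nonneg fun l _ => abs_nonneg _
  have hb0 : 0 ≤ b := Finset.sum_nonneg fun l _ => abs_nonneg _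
  have hc0 : 0 ≤ c := Finset.sum_nonneg fun l _ => abs_nonneg _
  have hγτ : 0 < γ * τ := mul_pos hγ hτ
  -- splitting of sums
  have hsplitB : ∀ f : Fin q → ℝ,
      ∑ l ∈ Bs, f l = ∑ l ∈ S0 ∩ Bs, f l + ∑ l ∈ Bs \ S0, f l := by
    intro f
    rw [Finset.inter_comm]
    exact (Finset.sum_inter_add_sum_sdiff Bs S0 f).symm
  have hScomp : ∀ f : Fin q → ℝ,
      ∑ l ∈ S0ᶜ, f l = ∑ l ∈ Bs \ S0, f l + ∑ l ∈ Ts \ S0, f l := by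
    intro f
    have e1 : S0ᶜ ∩ Bs = Bs \ S0 := by
      ext l; simp [Finset.mem_inter, Finset.mem_sdiff, Finset.mem_compl]; tauto
    have e2 : S0ᶜ \ Bs = Ts \ S0 := by
      ext l
      simp only [Finset.mem_sdiff, Finset.mem_compl, hBs, hTs, Finset.mem_filter,
        Finset.mem_univ, true_and, not_lt]
      tauto
    rw [← e1, ← e2]
    exact (Finset.sum_inter_add_sum_sdiff S0ᶜ Bs f).symm
  -- d : the signed change on S0 ∩ Bs
  set d := ∑ l ∈ S0 ∩ Bs, (|Vnext l| - |Vhat0 l|) with hd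
  have hdabs : |d| ≤ a := by
    refine le_trans (Finset.abs_sum_le_sum_abs _ _) (Finset.sum_le_sum fun l _ => ?_)
    have h1 := abs_abs_sub_abs_le_abs_sub (Vnext l) (Vhat0 l)
    simpa [hΔ] using h1
  have hE1 : ∑ l ∈ Bs, |Vnext l| - ∑ l ∈ Bs, |Vhat0 l| = d + b := by
    rw [hsplitB (fun l => |Vnext l|), hsplitB (fun l => |Vhat0 l|)]
    have h1 : ∑ l ∈ Bs \ S0, |Vhat0 l| = 0 :=
      Finset.sum_eq_zero fun l hl => by
        rw [hsupp l (Finset.mem_sdiff.mp hl).2]; simp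
    have h2 : ∑ l ∈ Bs \ S0, |Vnext l| = b := by
      refine Finset.sum_congr rfl fun l hl => ?_
      rw [hΔ]
      simp [hsupp l (Finset.mem_sdiff.mp hl).2]
    have h3 : ∑ l ∈ S0 ∩ Bs, (|Vnext l| - |Vhat0 l|)
        = ∑ l ∈ S0 ∩ Bs, |Vnext l| - ∑ l ∈ S0 ∩ Bs, |Vhat0 l| :=
      Finset.sum_sub_distrib _ _
    rw [h1, h2]
    rw [hd, h3]
    ring
  -- gradient bound
  have hgradineq : |gradC X Y A Vhat0 Δ| ≤ γ*τ/2 * (b + c) := by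
    rw [gradC_sum, abs_neg]
    have step1 : |∑ l, Δ l * ((∑ i, X i l * (Y i - deriv A (∑ j, Vhat0 j * X i j))) / (n:ℝ))|
        ≤ ∑ l ∈ S0ᶜ, |Δ l| * (γ*τ/2) := by
      have he : ∑ l ∈ S0ᶜ, |Δ l * ((∑ i, X i l * (Y i - deriv A (∑ j, Vhat0 j * X i j))) / (n:ℝ))|
          = ∑ l, |Δ l * ((∑ i, X i l * (Y i - deriv A (∑ j, Vhat0 j * X i j))) / (n:ℝ))| := by
        refine Finset.sum_subset (Finset.subset_univ _) fun x _ hx => ?_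
        have hxS : x ∈ S0 := by simpa using hx
        rw [hgl0 x hxS]
        simp
      calc |∑ l, Δ l * ((∑ i, X i l * (Y i - deriv A (∑ j, Vhat0 j * X i j))) / (n:ℝ))|
          ≤ ∑ l, |Δ l * ((∑ i, X i l * (Y i - deriv A (∑ j, Vhat0 j * X i j))) / (n:ℝ))| :=
            Finset.abs_sum_le_sum_abs _ _
        _ = ∑ l ∈ S0ᶜ, |Δ l * ((∑ i, X i l * (Y i - deriv A (∑ j, Vhat0 j * X i j))) / (n:ℝ))| :=
            he.symm
        _ ≤ ∑ l ∈ S0ᶜ, |Δ l| * (γ*τ/2) := by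
            refine Finset.sum_le_sum fun l _ => ?_
            rw [abs_mul]
            exact mul_le_mul_of_nonneg_left (hglb l) (abs_nonneg _)
    have hsum : ∑ l ∈ S0ᶜ, |Δ l| * (γ*τ/2) = γ*τ/2 * (b + c) := by
      rw [← Finset.sum_mul, hScomp (fun l => |Δ l|)]
      ring
    rw [← hsum]
    exact step1
  -- convexity lower bound
  have hconv : negLogLik n q X Y A Vhat0 + gradC X Y A Vhat0 Δ
      ≤ negLogLik n q X Y A Vnext := by
    have h := taylor_lb X Y A hA2 Vhat0 Δ 0
      (fun s _ => hessC_nonneg X A hA hA2 _ Δ)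
    rw [hVD] at h
    linarith
  -- basic inequality chain : cone condition
  have hchain : γ*τ*(d + b) ≤ γ*τ/2 * (b + c) := by
    have h1 : negLogLik n q X Y A Vhat0 - negLogLik n q X Y A Vnext
        ≤ -gradC X Y A Vhat0 Δ := by linarith
    have h2 : γ*τ*(∑ l ∈ Bs, |Vnext l|) - γ*τ*(∑ l ∈ Bs, |Vhat0 l|)
        ≤ negLogLik n q X Y A Vhat0 - negLogLik n q X Y A Vnext := by linarith
    have h3 : γ*τ*(∑ l ∈ Bs, |Vnext l|) - γ*τ*(∑ l ∈ Bs, |Vhat0 l|) = γ*τ*(d+b) := by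
      rw [← hE1]; ring
    have h4 : -gradC X Y A Vhat0 Δ ≤ γ*τ/2*(b+c) :=
      le_trans (neg_le_abs _) hgradineq
    linarith
  have hcone1 : b ≤ 2*a + c := by
    have h5 : γ*τ*(b - a) ≤ γ*τ*(d + b) := by
      have : b - a ≤ d + b := by
        have := neg_abs_le d
        linarith
      exact mul_le_mul_of_nonneg_left this hγτ.le
    nlinarith
  -- the RSC cone
  set Aset := S0 ∪ (Ts \ S0) with hAset
  have hdisj : Disjoint S0 (Ts \ S0) := disjoint_sdiff_self_right
  have hcard : Aset.card ≤ 2 * K0 := by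
    rw [hAset, Finset.card_union_of_disjoint hdisj]
    have := hFc
    omega
  have hAc : Asetᶜ = Bs \ S0 := by
    ext l
    simp only [hAset, Finset.mem_compl, Finset.mem_union, Finset.mem_sdiff, hBs, hTs,
      Finset.mem_filter, Finset.mem_univ, true_and, not_or, not_and, not_not, not_le, not_lt]
    constructor
    · intro ⟨h1, h2⟩
      exact ⟨by by_contra hcon; exact absurd (h2 (le_of_not_gt hcon)) (by simpa using h1), h1⟩
    · intro ⟨h1, h2⟩
      exact ⟨h2, fun h3 => absurd h3 (not_le.mpr h1)⟩
  have hconeA : ∑ l ∈ Asetᶜ, |Δ l| ≤ 3 * ∑ l ∈ Aset, |Δ l| := by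
    rw [hAc]
    have hsub1 : a ≤ ∑ l ∈ Aset, |Δ l| := by
      refine Finset.sum_le_sum_of_subset_of_nonneg ?_ (fun l _ _ => abs_nonneg _)
      rw [hAset]
      exact le_trans Finset.inter_subset_left Finset.subset_union_left
    have hsub2 : c ≤ ∑ l ∈ Aset, |Δ l| := by
      refine Finset.sum_le_sum_of_subset_of_nonneg ?_ (fun l _ _ => abs_nonneg _)
      rw [hAset]
      exact Finset.subset_union_right
    calc ∑ l ∈ Bs \ S0, |Δ l| = b := rfl
      _ ≤ 2*a + c := hcone1
      _ ≤ 3 * ∑ l ∈ Aset, |Δ l| := by linarith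
  -- RSC
  set P := ∑ l, Δ l ^ 2 with hP
  have hP0 : 0 ≤ P := Finset.sum_nonneg fun l _ => sq_nonneg _
  have hRS := hRSC Δ ⟨Aset, hcard, hconeA⟩
  have htay : negLogLik n q X Y A Vhat0 + gradC X Y A Vhat0 Δ + (m * P)/2
      ≤ negLogLik n q X Y A Vnext := by
    have h := taylor_lb X Y A hA2 Vhat0 Δ (m * P) (fun s hs => by
      have := hRS s hs
      rwa [hess_eq X Y A hA2] at this)
    rw [hVD] at h
    exact h
  -- combine
  have hcombine : m * P / 2 ≤ γ*τ*a + γ*τ*c := by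
    have h1 : m * P / 2 ≤ negLogLik n q X Y A Vnext - negLogLik n q X Y A Vhat0
        - gradC X Y A Vhat0 Δ := by linarith
    have h2 : negLogLik n q X Y A Vnext - negLogLik n q X Y A Vhat0
        ≤ γ*τ*(∑ l ∈ Bs, |Vhat0 l|) - γ*τ*(∑ l ∈ Bs, |Vnext l|) := by linarith
    have h3 : γ*τ*(∑ l ∈ Bs, |Vhat0 l|) - γ*τ*(∑ l ∈ Bs, |Vnext l|) = -(γ*τ*(d+b)) := by
      rw [← hE1]; ring
    have h4 : -(γ*τ*(d+b)) ≤ γ*τ*(a - b) := by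
      have h5 : -(d+b) ≤ a - b := by
        have := neg_abs_le d
        linarith
      calc -(γ*τ*(d+b)) = γ*τ*(-(d+b)) := by ring
        _ ≤ γ*τ*(a - b) := mul_le_mul_of_nonneg_left h5 hγτ.le
    have h6 : -gradC X Y A Vhat0 Δ ≤ γ*τ/2*(b+c) := le_trans (neg_le_abs _) hgradineq
    have h7 : 0 ≤ γ*τ*b := mul_nonneg hγτ.le hb0
    have h8 : 0 ≤ γ*τ*c := mul_nonneg hγτ.le hc0
    nlinarith
  -- Cauchy-Schwarz
  set Mp := (S0 ∩ Bs) ∪ (Ts \ S0) with hMp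
  have hdisj2 : Disjoint (S0 ∩ Bs) (Ts \ S0) := by
    refine Finset.disjoint_left.mpr fun l hl hl2 => ?_
    exact (Finset.mem_sdiff.mp hl2).2 (Finset.mem_inter.mp hl).1
  have hac : a + c = ∑ l ∈ Mp, |Δ l| := (Finset.sum_union hdisj2).symm
  have hcs : (∑ l ∈ Mp, |Δ l|) ^ 2 ≤ (Mp.card : ℝ) * P := by
    refine le_trans (cs_l1 Mp Δ) ?_
    refine mul_le_mul_of_nonneg_left ?_ (Nat.cast_nonneg _)
    exact Finset.sum_le_sum_of_subset_of_nonneg (Finset.subset_univ _)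
      (fun l _ _ => sq_nonneg _)
  -- quadratic juggling : P ≤ τ²·|Mp|/9
  have hPbound : 9 * P ≤ τ^2 * (Mp.card : ℝ) := by
    rcases eq_or_lt_of_le hP0 with hPz | hPpos
    · have hzz : P = 0 := hPz.symm
      rw [hzz]
      have h0 : (0:ℝ) ≤ τ^2 * (Mp.card:ℝ) := by positivity
      linarith only [h0]
    · have hT0 : 0 ≤ ∑ l ∈ Mp, |Δ l| := Finset.sum_nonneg fun l _ => abs_nonneg _
      have hk : m * P / 2 ≤ γ*τ*(∑ l ∈ Mp, |Δ l|) := by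
        rw [← hac]; linarith [hcombine]
      have hsq : (m * P / 2)^2 ≤ (γ*τ*(∑ l ∈ Mp, |Δ l|))^2 :=
        pow_le_pow_left₀ (by positivity) hk 2
      have hsq2 : (γ*τ*(∑ l ∈ Mp, |Δ l|))^2 ≤ γ^2*τ^2*((Mp.card : ℝ) * P) := by
        have : (γ*τ*(∑ l ∈ Mp, |Δ l|))^2 = γ^2*τ^2*(∑ l ∈ Mp, |Δ l|)^2 := by ring
        rw [this]
        exact mul_le_mul_of_nonneg_left hcs (by positivity)
      have hm6 : 6*γ ≤ m := by linarith
      have h36 : 36*γ^2 ≤ m^2 := by nlinarith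
      have hfin : (m * P / 2)^2 ≤ γ^2*τ^2*((Mp.card : ℝ) * P) := le_trans hsq hsq2
      have e : 36*γ^2*(P*P*(1/4)) ≤ m^2*(P*P*(1/4)) :=
        mul_le_mul_of_nonneg_right h36 (by positivity)
      have key1 : 9*γ^2*P^2 ≤ γ^2*τ^2*((Mp.card : ℝ) * P) := by nlinarith [e, hfin]
      nlinarith [key1, mul_pos (mul_pos hγ hγ) hPpos]
  -- counting at the next step
  have hτsq : (0:ℝ) < τ^2 := by positivity
  have hnext : ∀ l ∈ (S0 ∩ Bn) ∪ (Tn \ S0), τ^2 ≤ Δ l ^ 2 := by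
    intro l hl
    have habs : τ ≤ |Δ l| := by
      rcases Finset.mem_union.mp hl with hl1 | hl2
      · obtain ⟨hlS, hlB⟩ := Finset.mem_inter.mp hl1
        have h1 : |Vnext l| < τ := by
          have := (Finset.mem_filter.mp (by exact hlB)).2
          exact this
        have h2 : 2*τ ≤ |Vhat0 l| := hVhat2 l hlS
        have h3 : |Vhat0 l| - |Vnext l| ≤ |Δ l| := by
          have h4 := abs_sub_abs_le_abs_sub (Vhat0 l) (Vnext l)
          have h5 : |Vhat0 l - Vnext l| = |Δ l| := by rw [hΔ]; exact abs_sub_comm _ _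
          linarith
        linarith
      · obtain ⟨hlT, hlS⟩ := Finset.mem_sdiff.mp hl2
        have h1 : τ ≤ |Vnext l| := (Finset.mem_filter.mp hlT).2
        have h2 : Vhat0 l = 0 := hsupp l hlS
        have h3 : |Δ l| = |Vnext l| := by rw [hΔ]; simp [h2]
        linarith
    calc τ^2 ≤ |Δ l|^2 := pow_le_pow_left₀ hτ.le habs 2
      _ = Δ l ^ 2 := sq_abs _
  have hcount : (((S0 ∩ Bn) ∪ (Tn \ S0)).card : ℝ) * τ^2 ≤ P := by
    have h1 := Finset.card_nsmul_le_sum ((S0 ∩ Bn) ∪ (Tn \ S0)) (fun l => Δ l ^ 2) (τ^2) hnext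
    have h2 : ∑ l ∈ (S0 ∩ Bn) ∪ (Tn \ S0), Δ l ^ 2 ≤ P :=
      Finset.sum_le_sum_of_subset_of_nonneg (Finset.subset_univ _) (fun l _ _ => sq_nonneg _)
    have h3 : (((S0 ∩ Bn) ∪ (Tn \ S0)).card : ℝ) * τ^2
        ≤ ∑ l ∈ (S0 ∩ Bn) ∪ (Tn \ S0), Δ l ^ 2 := by
      simpa [nsmul_eq_mul] using h1
    linarith
  -- conclude
  have hfinal : (((S0 ∩ Bn) ∪ (Tn \ S0)).card : ℝ) ≤ ((Mp.card : ℝ)) / 9 := by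
    nlinarith
  exact hfinal

open scoped Classical in
/-- **Deterministic core of Theorem 1.**  Under minimum signal strength,
oracle first-order conditions and sup-norm bounds on the event `E_j`,
restricted strong convexity over the cone with sparsity `2K⁰`, and with
`(Ṽ^[t])` the DC iterates of Algorithm 1 (each a global minimizer of the
corresponding weighted-ℓ1 subproblem, with initial thresholded support of
size at most `K⁰`), the thresholded support after
`t ≥ 1 + ⌈log(2K⁰)/log 4⌉` iterations is exactly the true support `S⁰`. -/
theorem dc_support_recovery
    (n q : ℕ) (hn : 0 < n) (hq : 0 < q)
    (X : Matrix (Fin n) (Fin q) ℝ) (Y : Fin n → ℝ)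
    (A : ℝ → ℝ) (hA : ConvexOn ℝ Set.univ A) (hA2 : ContDiff ℝ 2 A)
    (φ : ℝ → ℝ) (hφ : φ = deriv A)
    (γ τ m : ℝ) (hτ : 0 < τ) (hm : 0 < m) (hγ : 0 < γ) (hγm : γ ≤ m / 6)
    (S0 : Finset (Fin q)) (K0 : ℕ) (hK0 : K0 = S0.card) (hK1 : 1 ≤ K0)
    (V0 : Fin q → ℝ)
    (hV0supp : ∀ l, V0 l ≠ 0 ↔ l ∈ S0)
    (hsignal : ∀ l ∈ S0, 2.5 * τ ≤ |V0 l|)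
    (Vhat0 : Fin q → ℝ)
    (hsupp : ∀ l ∉ S0, Vhat0 l = 0)
    (hKKT : ∀ l ∈ S0, ∑ i, X i l * (Y i - φ (∑ j, Vhat0 j * X i j)) = 0)
    (hgrad : ∀ l, |(∑ i, X i l * (Y i - φ (∑ j, Vhat0 j * X i j))) / (n : ℝ)|
        ≤ γ * τ / 2)
    (hclose : ∀ l, |Vhat0 l - V0 l| ≤ τ / 2)
    (hRSC : ∀ Δ : Fin q → ℝ,
      (∃ Aset : Finset (Fin q), Aset.card ≤ 2 * K0 ∧
          ∑ l ∈ Asetᶜ, |Δ l| ≤ 3 * ∑ l ∈ Aset, |Δ l|) →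
      ∀ t ∈ Set.Icc (0 : ℝ) 1,
        m * ∑ l, Δ l ^ 2 ≤
          iteratedFDeriv ℝ 2 (negLogLik n q X Y A) (Vhat0 + t • Δ) ![Δ, Δ])
    (Vt : ℕ → Fin q → ℝ)
    (hinit : (Finset.univ.filter fun l => τ ≤ |Vt 0 l|).card ≤ K0)
    (hiter : ∀ t : ℕ, ∀ V : Fin q → ℝ,
      negLogLik n q X Y A (Vt (t + 1))
          + γ * τ * ∑ l ∈ Finset.univ.filter (fun l => |Vt t l| < τ), |Vt (t + 1) l| ≤
        negLogLik n q X Y A V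
          + γ * τ * ∑ l ∈ Finset.univ.filter (fun l => |Vt t l| < τ), |V l|) :
    ∀ t : ℕ, (1 + ⌈Real.log (2 * (K0 : ℝ)) / Real.log 4⌉ : ℤ) ≤ (t : ℤ) →
      (Finset.univ.filter fun l => τ ≤ |Vt t l|) = S0 := by
  classical
  subst hφ
  -- abbreviations
  have hVhat2 : ∀ l ∈ S0, 2*τ ≤ |Vhat0 l| := by
    intro l hl
    have h1 := hsignal l hl
    have h2 := hclose l
    have h3 : |V0 l| - |Vhat0 l| ≤ |Vhat0 l - V0 l| := by
      rw [abs_sub_comm]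
      exact abs_sub_abs_le_abs_sub _ _
    linarith
  have hgl0 : ∀ l ∈ S0, (∑ i, X i l * (Y i - deriv A (∑ j, Vhat0 j * X i j))) / (n:ℝ) = 0 := by
    intro l hl
    rw [hKKT l hl]
    exact zero_div _
  -- misclassification count
  have main : ∀ s : ℕ,
      ((((S0 ∩ Finset.univ.filter fun l => |Vt s l| < τ)
        ∪ ((Finset.univ.filter fun l => τ ≤ |Vt s l|) \ S0)).card : ℝ))
          ≤ 2*(K0:ℝ)/9^s
        ∧ ((Finset.univ.filter fun l => τ ≤ |Vt s l|) \ S0).card ≤ K0 := by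
    intro s
    induction s with
    | zero =>
      have c1 : (S0 ∩ Finset.univ.filter fun l => |Vt 0 l| < τ).card ≤ K0 := by
        rw [hK0]
        exact Finset.card_le_card Finset.inter_subset_left
      have c2 : ((Finset.univ.filter fun l => τ ≤ |Vt 0 l|) \ S0).card ≤ K0 :=
        le_trans (Finset.card_le_card Finset.sdiff_subset) hinit
      constructor
      · have hcu : (((S0 ∩ Finset.univ.filter fun l => |Vt 0 l| < τ)
            ∪ ((Finset.univ.filter fun l => τ ≤ |Vt 0 l|) \ S0)).card) ≤ K0 + K0 :=
          le_trans (Finset.card_union_le _ _) (by omega)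
        rw [pow_zero, div_one]
        calc (((S0 ∩ Finset.univ.filter fun l => |Vt 0 l| < τ)
            ∪ ((Finset.univ.filter fun l => τ ≤ |Vt 0 l|) \ S0)).card : ℝ)
            ≤ ((K0 + K0 : ℕ) : ℝ) := by exact_mod_cast hcu
          _ = 2*(K0:ℝ) := by push_cast; ring
      · exact c2
    | succ s ih =>
      have hstep := DCR.step_lemma X Y A hA hA2 γ τ m hτ hm hγ hγm S0 K0 hK0 Vhat0
        hsupp hVhat2 hgl0 hgrad hRSC (Vt s) (Vt (s+1)) ih.2 (hiter s Vhat0)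
      have h9s : (0:ℝ) < 9^s := by positivity
      constructor
      · calc ((((S0 ∩ Finset.univ.filter fun l => |Vt (s+1) l| < τ)
            ∪ ((Finset.univ.filter fun l => τ ≤ |Vt (s+1) l|) \ S0)).card : ℝ))
            ≤ (((S0 ∩ Finset.univ.filter fun l => |Vt s l| < τ)
            ∪ ((Finset.univ.filter fun l => τ ≤ |Vt s l|) \ S0)).card : ℝ) / 9 := hstep
          _ ≤ (2*(K0:ℝ)/9^s)/9 := by linarith [ih.1]
          _ = 2*(K0:ℝ)/9^(s+1) := by rw [pow_succ]; ring
      · have hsub : (Finset.univ.filter fun l => τ ≤ |Vt (s+1) l|) \ S0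
            ⊆ (S0 ∩ Finset.univ.filter fun l => |Vt (s+1) l| < τ)
              ∪ ((Finset.univ.filter fun l => τ ≤ |Vt (s+1) l|) \ S0) :=
          Finset.subset_union_right
        have hK0R : (0:ℝ) ≤ (K0:ℝ) := Nat.cast_nonneg _
        have h1 : (((Finset.univ.filter fun l => τ ≤ |Vt (s+1) l|) \ S0).card : ℝ)
            ≤ (K0 : ℝ) := by
          have hA1 : (((Finset.univ.filter fun l => τ ≤ |Vt (s+1) l|) \ S0).card : ℝ)
              ≤ (((S0 ∩ Finset.univ.filter fun l => |Vt (s+1) l| < τ)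
              ∪ ((Finset.univ.filter fun l => τ ≤ |Vt (s+1) l|) \ S0)).card : ℝ) := by
            exact_mod_cast Finset.card_le_card hsub
          have hA2' : (((S0 ∩ Finset.univ.filter fun l => |Vt s l| < τ)
              ∪ ((Finset.univ.filter fun l => τ ≤ |Vt s l|) \ S0)).card : ℝ)
              ≤ 2*(K0:ℝ) := by
            have h2 : 2*(K0:ℝ)/9^s ≤ 2*(K0:ℝ) := by
              exact div_le_self (by linarith) (one_le_pow₀ (by norm_num))
            linarith [ih.1]
          linarith [hstep]
        exact_mod_cast h1
  -- final numeric argument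
  intro t ht
  have hK0R : (1:ℝ) ≤ (K0:ℝ) := by exact_mod_cast hK1
  have h2Kpos : (0:ℝ) < 2*(K0:ℝ) := by linarith
  have hlog2K : 0 ≤ Real.log (2*(K0:ℝ)) := Real.log_nonneg (by linarith)
  have hlog4 : 0 < Real.log 4 := Real.log_pos (by norm_num)
  have hlog9 : 0 < Real.log 9 := Real.log_pos (by norm_num)
  have h49 : Real.log 4 ≤ Real.log 9 := Real.log_le_log (by norm_num) (by norm_num)
  have hceil : Real.log (2*(K0:ℝ)) / Real.log 4
      ≤ (⌈Real.log (2*(K0:ℝ)) / Real.log 4⌉ : ℝ) := Int.le_ceil _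
  have htR : (1:ℝ) + Real.log (2*(K0:ℝ))/Real.log 4 ≤ (t:ℝ) := by
    have hcast : ((1 + ⌈Real.log (2 * (K0:ℝ)) / Real.log 4⌉ : ℤ) : ℝ) ≤ ((t:ℤ) : ℝ) := by
      exact_mod_cast ht
    push_cast at hcast
    linarith
  have hkey : Real.log (2*(K0:ℝ)) < (t:ℝ) * Real.log 9 := by
    set r := Real.log (2*(K0:ℝ)) / Real.log 4 with hr
    have e1 : r * Real.log 4 = Real.log (2*(K0:ℝ)) := div_mul_cancel₀ _ (ne_of_gt hlog4)
    have hr0 : 0 ≤ r := div_nonneg hlog2K hlog4.le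
    have e2 : r * Real.log 4 ≤ r * Real.log 9 := mul_le_mul_of_nonneg_left h49 hr0
    have e3 : (1 + r) * Real.log 9 ≤ (t:ℝ) * Real.log 9 :=
      mul_le_mul_of_nonneg_right htR hlog9.le
    nlinarith
  have h9t : 2*(K0:ℝ) < 9^t := by
    have hlt : Real.log (2*(K0:ℝ)) < Real.log ((9:ℝ)^t) := by
      rw [Real.log_pow]
      exact_mod_cast hkey
    calc 2*(K0:ℝ) = Real.exp (Real.log (2*(K0:ℝ))) := (Real.exp_log h2Kpos).symm
      _ < Real.exp (Real.log ((9:ℝ)^t)) := Real.exp_lt_exp.mpr hlt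
      _ = (9:ℝ)^t := Real.exp_log (by positivity)
  have h9pos : (0:ℝ) < 9^t := by positivity
  have hlt1 : ((((S0 ∩ Finset.univ.filter fun l => |Vt t l| < τ)
      ∪ ((Finset.univ.filter fun l => τ ≤ |Vt t l|) \ S0)).card : ℝ)) < 1 := by
    calc ((((S0 ∩ Finset.univ.filter fun l => |Vt t l| < τ)
        ∪ ((Finset.univ.filter fun l => τ ≤ |Vt t l|) \ S0)).card : ℝ))
        ≤ 2*(K0:ℝ)/9^t := (main t).1
      _ < 1 := by rw [div_lt_one h9pos]; exact h9t
  have hcard0 : ((S0 ∩ Finset.univ.filter fun l => |Vt t l| < τ)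
      ∪ ((Finset.univ.filter fun l => τ ≤ |Vt t l|) \ S0)).card = 0 := by
    by_contra hne
    have h1 : 1 ≤ ((S0 ∩ Finset.univ.filter fun l => |Vt t l| < τ)
        ∪ ((Finset.univ.filter fun l => τ ≤ |Vt t l|) \ S0)).card := Nat.one_le_iff_ne_zero.mpr hne
    have : (1:ℝ) ≤ ((((S0 ∩ Finset.univ.filter fun l => |Vt t l| < τ)
        ∪ ((Finset.univ.filter fun l => τ ≤ |Vt t l|) \ S0)).card : ℝ)) := by
      exact_mod_cast h1
    linarith
  have hemp := Finset.card_eq_zero.mp hcard0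
  obtain ⟨hemp1, hemp2⟩ := Finset.union_eq_empty.mp hemp
  ext l
  simp only [Finset.mem_filter, Finset.mem_univ, true_and]
  constructor
  · intro hl
    by_contra hns
    have : l ∈ (Finset.univ.filter fun l => τ ≤ |Vt t l|) \ S0 :=
      Finset.mem_sdiff.mpr ⟨Finset.mem_filter.mpr ⟨Finset.mem_univ l, hl⟩, hns⟩
    rw [hemp2] at this
    exact absurd this (Finset.notMem_empty l)
  · intro hl
    by_contra hns
    have hB : l ∈ S0 ∩ Finset.univ.filter fun l => |Vt t l| < τ :=
      Finset.mem_inter.mpr ⟨hl, Finset.mem_filter.mpr ⟨Finset.mem_univ l, not_le.mp hns⟩⟩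
    rw [hemp1] at hB
    exact absurd hB (Finset.notMem_empty l)
end
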